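/- arXiv:1702.02704 — 6 statements merged into one kernel-verified Lean document; each statement's English description precedes it below -/
import Mathlib

section
/- Let a_0 be the integer with 1 ≤ a_0 ≤ a_d such that a_d divides a_0 + a_1 + ⋯ + a_{d-1} + 1. Then the group Λ_{Δ(A)} is the cyclic group generated by (a_0/a_d, a_1/a_d, …, a_{d-1}/a_d, 1/a_d) ∈ (ℝ/ℤ)^{d+1}. -/
open scoped BigOperators
open MeasureTheory

noncomputable section

/-- The real point corresponding to a lattice point. -/
def toReal {d : ℕ} (v : Fin d → ℤ) : Fin d → ℝ := fun i => (v i : ℝ)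

/-- The finite abelian group `Λ_Δ ⊆ (ℝ/ℤ)^{d+1}` attached to a lattice simplex with
vertices `v 0, …, v d`. -/
def LambdaSet {d : ℕ} (v : Fin (d + 1) → Fin d → ℤ) :
    Set (Fin (d + 1) → AddCircle (1 : ℝ)) :=
  {lam | ∃ mu : Fin (d + 1) → ℝ,
    (∀ i, ((mu i : ℝ) : AddCircle (1 : ℝ)) = lam i) ∧
    (∀ j, ∃ n : ℤ, ∑ i, mu i * (v i j : ℝ) = (n : ℝ)) ∧
    (∃ n : ℤ, ∑ i, mu i = (n : ℝ))}

/-- The simplex spanned by the given lattice points. -/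
def simplexOf {d : ℕ} (v : Fin (d + 1) → Fin d → ℤ) : Set (Fin d → ℝ) :=
  convexHull ℝ (Set.range fun i => toReal (v i))

/-- The dual (polar) body `{y : ⟨x,y⟩ ≤ 1 ∀ x ∈ P}`. -/
def polarDual {d : ℕ} (P : Set (Fin d → ℝ)) : Set (Fin d → ℝ) :=
  {y | ∀ x ∈ P, ∑ i, x i * y i ≤ 1}

/-- A point of `ℝ^d` is a lattice point if all its coordinates are integers. -/
def IsLatticePoint {d : ℕ} (x : Fin d → ℝ) : Prop := ∀ i, ∃ n : ℤ, x i = (n : ℝ)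

/-- A polytope is reflexive if the origin is its unique interior lattice point and its
dual polytope is again a lattice polytope. -/
def IsReflexive {d : ℕ} (P : Set (Fin d → ℝ)) : Prop :=
  (0 ∈ interior P) ∧
  (∀ x ∈ interior P, IsLatticePoint x → x = 0) ∧
  ∃ V : Finset (Fin d → ℤ), polarDual P = convexHull ℝ (toReal '' (V : Set (Fin d → ℤ)))

/-- A lattice polytope is Gorenstein of index `r` if some lattice translate of its
`r`-th dilate is reflexive. -/
def IsGorenstein {d : ℕ} (P : Set (Fin d → ℝ)) (r : ℕ) : Prop :=
  ∃ w : Fin d → ℤ, IsReflexive ((fun x => (r : ℝ) • x + toReal w) '' P)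

/-- Unimodular equivalence of subsets of `ℝ^d`. -/
def UnimodEquiv {d : ℕ} (P Q : Set (Fin d → ℝ)) : Prop :=
  ∃ (U : Matrix (Fin d) (Fin d) ℤ) (w : Fin d → ℤ), IsUnit U.det ∧
    Q = (fun x => fun j => (∑ i, x i * (U i j : ℝ)) + (w j : ℝ)) '' P

/-- `P` is a lattice pyramid: it is unimodularly equivalent to
`conv(V × {0}, e_j)` for a finite set `V` of lattice points lying in a coordinate
hyperplane. -/
def IsLatticePyramid {d : ℕ} (P : Set (Fin d → ℝ)) : Prop :=
  ∃ (j : Fin d) (V : Finset (Fin d → ℤ)),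
    (∀ x ∈ V, x j = 0) ∧
    UnimodEquiv P (convexHull ℝ
      ((toReal '' (V : Set (Fin d → ℤ))) ∪ {fun i => if i = j then (1 : ℝ) else 0}))

/-- The vertices of the simplex `Δ(A)` associated to `A = (a 1, …, a d)`:
`v 0 = 0`, `v i = e_i` for `1 ≤ i ≤ d-1`, and
`v d = ∑_{j=1}^{d-1} (a d - a j) e_j + (a d) e_d`. -/
def simplexVerts (d : ℕ) (a : ℕ → ℤ) : Fin (d + 1) → Fin d → ℤ := fun i j =>
  if (i : ℕ) = 0 then 0
  else if (i : ℕ) = d then (if (j : ℕ) = d - 1 then a d else a d - a ((j : ℕ) + 1))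
  else if (j : ℕ) + 1 = (i : ℕ) then 1 else 0

/-- The vertices of the simplex `Δ(A,B)`: `v 0 = 0`, `v i = e_i` for
`i ∉ {0, s, d}`, `v s = ∑_{j=1}^s (a j) e_j`, `v d = ∑_{j=1}^d (b j) e_j`. -/
def simplexVerts2 (d s : ℕ) (a b : ℕ → ℤ) : Fin (d + 1) → Fin d → ℤ := fun i j =>
  if (i : ℕ) = 0 then 0
  else if (i : ℕ) = s then (if (j : ℕ) + 1 ≤ s then a ((j : ℕ) + 1) else 0)
  else if (i : ℕ) = d then b ((j : ℕ) + 1)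
  else if (j : ℕ) + 1 = (i : ℕ) then 1 else 0

/-- The generator `(a 0/a d, a 1/a d, …, a (d-1)/a d, 1/a d)` of `Λ_{Δ(A)}`. -/
def genOne (d : ℕ) (a : ℕ → ℤ) : Fin (d + 1) → AddCircle (1 : ℝ) := fun i =>
  (((if (i : ℕ) = d then 1 else (a (i : ℕ) : ℝ)) / (a d : ℝ) : ℝ) : AddCircle (1 : ℝ))

/-!
Reduced modulo `ℤ`, the conditions defining `Λ_Δ` become linear equations in `(ℝ/ℤ)^{d+1}`.
With `g = (a₀, …, a_{d-1}, 1)`, coordinate `j` of `∑ λᵢ vᵢ` is `λ_{j+1} + (a_d - g_{j+1}) λ_d`;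
the last coordinate gives `a_d λ_d = 0`, and then the others give `λᵢ = gᵢ λ_d` for `i ≥ 1`.
The condition `∑ λᵢ = 0` forces the same for `i = 0`, since `a_d ∣ ∑ gᵢ`. Hence
`Λ_Δ = {g θ : a_d θ = 0}`, and the `a_d`-torsion of `ℝ/ℤ` is generated by `1/a_d`.
-/

lemma coe_eq_zero_iff_exists_int {x : ℝ} :
    (x : AddCircle (1 : ℝ)) = 0 ↔ ∃ n : ℤ, x = n := by
  rw [AddCircle.coe_eq_zero_iff]
  simp [eq_comm]

lemma mem_LambdaSet_iff {d : ℕ} (v : Fin (d + 1) → Fin d → ℤ)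
    (lam : Fin (d + 1) → AddCircle (1 : ℝ)) :
    lam ∈ LambdaSet v ↔ (∀ j, ∑ i, v i j • lam i = 0) ∧ ∑ i, lam i = 0 := by
  have hcoe : ∀ mu : Fin (d + 1) → ℝ, (∀ i, (mu i : AddCircle (1 : ℝ)) = lam i) →
      (∀ j, ((∑ i, mu i * v i j : ℝ) : AddCircle (1 : ℝ)) = ∑ i, v i j • lam i) ∧
      ((∑ i, mu i : ℝ) : AddCircle (1 : ℝ)) = ∑ i, lam i := by
    intro mu hmu
    refine ⟨fun j => ?_, ?_⟩
    · simp [← hmu, ← AddCircle.coe_zsmul, zsmul_eq_mul, mul_comm]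
    · simp [← hmu]
  constructor
  · rintro ⟨mu, hmu, hv, hsum⟩
    obtain ⟨hcv, hcs⟩ := hcoe mu hmu
    refine ⟨fun j => ?_, ?_⟩
    · rw [← hcv, coe_eq_zero_iff_exists_int]; exact hv j
    · rw [← hcs, coe_eq_zero_iff_exists_int]; exact hsum
  · rintro ⟨hv, hsum⟩
    choose mu hmu using fun i => QuotientAddGroup.mk_surjective (lam i)
    obtain ⟨hcv, hcs⟩ := hcoe mu hmu
    refine ⟨mu, hmu, fun j => ?_, ?_⟩
    · rw [← coe_eq_zero_iff_exists_int, hcv]; exact hv j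
    · rw [← coe_eq_zero_iff_exists_int, hcs]; exact hsum

def genOneNumerator (d : ℕ) (a : ℕ → ℤ) (i : Fin (d + 1)) : ℤ :=
  if (i : ℕ) = d then 1 else a i

lemma genOne_eq_zsmul (d : ℕ) (a : ℕ → ℤ) :
    genOne d a = fun i => genOneNumerator d a i • ((1 / a d : ℝ) : AddCircle (1 : ℝ)) := by
  funext i
  rw [genOne, genOneNumerator, ← AddCircle.coe_zsmul, zsmul_eq_mul, mul_one_div]
  split_ifs <;> simp

lemma sum_genOneNumerator (d : ℕ) (a : ℕ → ℤ) :
    ∑ i, genOneNumerator d a i = ∑ i ∈ Finset.range d, a i + 1 := by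
  rw [Fin.sum_univ_castSucc, ← Fin.sum_univ_eq_sum_range]
  simp [genOneNumerator, Fin.is_lt, Nat.ne_of_lt]

-- Because the last numerator is `1`, the case `j = d - 1` (entry `a d`) fits the same pattern.
lemma simplexVerts_eq_add (d : ℕ) (a : ℕ → ℤ) (i : Fin (d + 1)) (j : Fin d) :
    simplexVerts d a i j = (if i = j.succ then 1 else 0) +
      (if i = Fin.last d then a d - genOneNumerator d a j.succ else 0) := by
  have := j.isLt
  simp only [simplexVerts, genOneNumerator, Fin.ext_iff, Fin.val_succ, Fin.val_last]
  split_ifs <;> omega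

lemma sum_simplexVerts_zsmul {M : Type*} [AddCommGroup M] (d : ℕ) (a : ℕ → ℤ)
    (lam : Fin (d + 1) → M) (j : Fin d) :
    ∑ i, simplexVerts d a i j • lam i =
      lam j.succ + (a d - genOneNumerator d a j.succ) • lam (Fin.last d) := by
  simp [simplexVerts_eq_add, add_smul, ite_smul, Finset.sum_add_distrib]

lemma succ_add_zsmul_last_eq_zero_and_sum_eq_zero_iff {M : Type*} [AddCommGroup M] {d : ℕ}
    (hd : 1 ≤ d) {N : ℤ} {g : Fin (d + 1) → ℤ} (hg : g (Fin.last d) = 1) (hN : N ∣ ∑ i, g i)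
    (lam : Fin (d + 1) → M) :
    ((∀ j : Fin d, lam j.succ + (N - g j.succ) • lam (Fin.last d) = 0) ∧ ∑ i, lam i = 0) ↔
      ∃ θ : M, N • θ = 0 ∧ lam = fun i => g i • θ := by
  have hsum_smul : ∀ θ : M, N • θ = 0 → (∑ i, g i) • θ = 0 := by
    obtain ⟨t, ht⟩ := hN
    intro θ hθ
    rw [ht, mul_comm, mul_zsmul, hθ, zsmul_zero]
  constructor
  · rintro ⟨hsucc, hsum⟩
    have hθ : N • lam (Fin.last d) = 0 := by
      have hlast := hsucc ⟨d - 1, by omega⟩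
      rwa [show (⟨d - 1, by omega⟩ : Fin d).succ = Fin.last d from Fin.ext (by simp; omega),
        hg, sub_smul, one_smul, add_sub_cancel] at hlast
    have hsucc' : ∀ j : Fin d, lam j.succ = g j.succ • lam (Fin.last d) := fun j => by
      rw [← sub_eq_zero, ← hsucc j, sub_smul, hθ]; abel
    refine ⟨lam (Fin.last d), hθ, funext fun i => Fin.cases ?_ hsucc' i⟩
    have hsum_g := hsum_smul _ hθ
    rw [Fin.sum_univ_succ] at hsum hsum_g
    simp only [hsucc', add_smul, ← Finset.sum_smul] at hsum hsum_g
    exact add_right_cancel (hsum.trans hsum_g.symm)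
  · rintro ⟨θ, hθ, rfl⟩
    refine ⟨fun j => ?_, ?_⟩
    · simp only [hg, one_smul, ← add_smul, add_sub_cancel, hθ]
    · rw [← Finset.sum_smul, hsum_smul θ hθ]

lemma zsmul_eq_zero_iff_exists_zsmul_one_div {N : ℤ} (hN : N ≠ 0) (θ : AddCircle (1 : ℝ)) :
    N • θ = 0 ↔ ∃ k : ℤ, θ = k • ((1 / N : ℝ) : AddCircle (1 : ℝ)) := by
  have hN' : (N : ℝ) ≠ 0 := Int.cast_ne_zero.mpr hN
  constructor
  · obtain ⟨x, rfl⟩ := QuotientAddGroup.mk_surjective θ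
    intro hx
    obtain ⟨n, hn⟩ := (coe_eq_zero_iff_exists_int (x := N * x)).mp
      (by rwa [← zsmul_eq_mul, AddCircle.coe_zsmul])
    refine ⟨n, ?_⟩
    rw [← AddCircle.coe_zsmul, zsmul_eq_mul, ← hn, mul_one_div, mul_div_cancel_left₀ x hN']
  · rintro ⟨k, rfl⟩
    rw [smul_comm, ← AddCircle.coe_zsmul, zsmul_eq_mul, mul_one_div_cancel hN',
      AddCircle.coe_period, smul_zero]

lemma mem_LambdaSet_simplexVerts_iff {d : ℕ} (hd : 1 ≤ d) {a : ℕ → ℤ}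
    (hdvd : a d ∣ ∑ i ∈ Finset.range d, a i + 1) (lam : Fin (d + 1) → AddCircle (1 : ℝ)) :
    lam ∈ LambdaSet (simplexVerts d a) ↔
      ∃ θ, a d • θ = 0 ∧ lam = fun i => genOneNumerator d a i • θ := by
  rw [mem_LambdaSet_iff]
  simp_rw [sum_simplexVerts_zsmul]
  exact succ_add_zsmul_last_eq_zero_and_sum_eq_zero_iff hd (by simp [genOneNumerator])
    (by rwa [sum_genOneNumerator]) lam

theorem statement4_general {d : ℕ} (hd : 1 ≤ d) (a : ℕ → ℤ)
    (ha0 : 1 ≤ a 0 ∧ a 0 ≤ a d)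
    (hdvd : a d ∣ (∑ i ∈ Finset.range d, a i) + 1) :
    LambdaSet (simplexVerts d a) = Set.range fun k : ℤ => k • genOne d a := by
  have had : a d ≠ 0 := by omega
  ext lam
  simp only [mem_LambdaSet_simplexVerts_iff hd hdvd, zsmul_eq_zero_iff_exists_zsmul_one_div had,
    genOne_eq_zsmul, Set.mem_range]
  constructor
  · rintro ⟨θ, ⟨k, rfl⟩, rfl⟩
    exact ⟨k, funext fun i => by rw [Pi.smul_apply, smul_comm]⟩
  · rintro ⟨k, rfl⟩
    exact ⟨_, ⟨k, rfl⟩, funext fun i => by rw [Pi.smul_apply, smul_comm]⟩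

/-- `Λ_{Δ(A)}` is the cyclic group generated by
`(a 0/a d, …, a (d-1)/a d, 1/a d)`, where `a 0` is the integer with
`1 ≤ a 0 ≤ a d` and `a d ∣ a 0 + ⋯ + a (d-1) + 1`. -/
theorem statement4 {d : ℕ} (hd : 1 ≤ d) (a : ℕ → ℤ)
    (ha : ∀ i, 1 ≤ i → i ≤ d - 1 → 1 ≤ a i ∧ a i ≤ a d)
    (ha0 : 1 ≤ a 0 ∧ a 0 ≤ a d)
    (hdvd : a d ∣ (∑ i ∈ Finset.range d, a i) + 1) :
    LambdaSet (simplexVerts d a) = Set.range fun k : ℤ => k • genOne d a :=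
  statement4_general hd a ha0 hdvd
end
end

section
/- The simplex Δ(A) is not a lattice pyramid over any lower-dimensional lattice simplex if and only if 1 ≤ a_0, a_1, …, a_{d-1} < a_d, where a_0 is the integer with 1 ≤ a_0 ≤ a_d and a_d | (a_0 + ⋯ + a_{d-1} + 1). -/
open scoped BigOperators
open MeasureTheory

noncomputable section

/-!
`Δ` is a lattice pyramid with apex `v_p` exactly when an integral affine functional `ℓ` takes the
value `1` at `v_p` and `0` at the other vertices: given the pyramid, `ℓ` is the coordinate `x_j`
pulled back along the unimodular map onto `conv(V × {0}, e_j)`; given `ℓ` with some coefficient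
`±1`, it can be completed to unimodular coordinates.

For `Δ(A)` one has `v_d ≡ -∑_{k<d} a_k e_k (mod a_d)`, so such an `ℓ` forces `a_d ∣ a_p` for a
middle apex, `a_d ∣ 1` for the apex `v_d`, and `a_d ∣ a_1 + ⋯ + a_{d-1} + 1`, hence `a_d ∣ a_0`,
for the apex `v_0`; all of this is impossible when `1 ≤ a_i < a_d`. Conversely, if `a_k = a_d` for
some `1 ≤ k < d` then `x_k` is such a functional for `v_k`, and if `a_0 = a_d` then
`1 - x_1 - ⋯ - x_{d-1} + c x_d` is one for `v_0`, with `c` read off from `v_d`.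
-/

open Matrix Set

namespace Matrix

lemma det_updateCol_one {n : Type*} [Fintype n] [DecidableEq n] {R : Type*} [CommRing R]
    (j : n) (c : n → R) : ((1 : Matrix n n R).updateCol j c).det = c j := by
  simpa [one_apply] using det_updateCol_sum (1 : Matrix n n R) j c

end Matrix

namespace LatticeSimplex

section Pyramid

variable {d : ℕ} {j : Fin d} {A : Set (Fin d → ℝ)}

def intAffine (U : Matrix (Fin d) (Fin d) ℤ) (w : Fin d → ℤ) : (Fin d → ℝ) →ᵃ[ℝ] (Fin d → ℝ) :=
  (U.map (Int.cast : ℤ → ℝ)).vecMulLinear.toAffineMap + AffineMap.const ℝ _ (toReal w)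

lemma coe_intAffine (U : Matrix (Fin d) (Fin d) ℤ) (w : Fin d → ℤ) :
    ⇑(intAffine U w) = fun x j => (∑ i, x i * (U i j : ℝ)) + (w j : ℝ) :=
  rfl

lemma toReal_injective : Function.Injective (toReal (d := d)) := fun x y h =>
  funext fun t => by simpa [toReal] using congrFun h t

lemma intAffine_toReal (U : Matrix (Fin d) (Fin d) ℤ) (w x : Fin d → ℤ) :
    intAffine U w (toReal x) = toReal (x ᵥ* U + w) := by
  funext t
  simp [coe_intAffine, toReal, vecMul, dotProduct]

lemma intAffine_injective {U : Matrix (Fin d) (Fin d) ℤ} (hU : IsUnit U.det) (w : Fin d → ℤ) :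
    Function.Injective (intAffine U w) := by
  have hdet : IsUnit (U.map (Int.cast : ℤ → ℝ)).det := by
    rw [← Int.cast_det]
    exact hU.map (Int.castRingHom ℝ)
  intro x y hxy
  have h : x ᵥ* U.map Int.cast = y ᵥ* U.map Int.cast := add_right_cancel hxy
  simpa [mul_nonsing_inv _ hdet] using congrArg (· ᵥ* (U.map (Int.cast : ℤ → ℝ))⁻¹) h

lemma intAffine_image_simplexOf (U : Matrix (Fin d) (Fin d) ℤ) (w : Fin d → ℤ)
    (v : Fin (d + 1) → Fin d → ℤ) :
    intAffine U w '' simplexOf v = convexHull ℝ (range fun i => toReal (v i ᵥ* U + w)) := by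
  rw [simplexOf, AffineMap.image_convexHull, ← range_comp]
  simp only [Function.comp_def, intAffine_toReal]

lemma indicator_eq_single (j : Fin d) :
    (fun i => if i = j then (1 : ℝ) else 0) = Pi.single j 1 :=
  funext fun i => (Pi.single_apply j 1 i).symm

lemma exists_mem_segment_of_mem_convexHull_union_single (hA : ∀ y ∈ A, y j = 0)
    {x : Fin d → ℝ} (hx : x ∈ convexHull ℝ (A ∪ {Pi.single j 1})) :
    ∃ y : Fin d → ℝ, y j = 0 ∧ x ∈ segment ℝ (Pi.single j 1) y := by
  rcases A.eq_empty_or_nonempty with rfl | hne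
  · rw [empty_union, convexHull_singleton, mem_singleton_iff] at hx
    exact ⟨0, rfl, hx ▸ left_mem_segment ℝ _ _⟩
  rw [union_singleton, convexHull_insert hne, mem_convexJoin] at hx
  obtain ⟨_, rfl, y, hy, hxy⟩ := hx
  refine ⟨y, ?_, hxy⟩
  exact convexHull_min hA (convex_hyperplane (LinearMap.proj j).isLinear 0) hy

lemma apply_mem_Icc_of_mem_convexHull_union_single (hA : ∀ y ∈ A, y j = 0)
    {x : Fin d → ℝ} (hx : x ∈ convexHull ℝ (A ∪ {Pi.single j 1})) : x j ∈ Icc (0 : ℝ) 1 := by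
  obtain ⟨y, hyj, θ, μ, hθ, hμ, hθμ, rfl⟩ :=
    exists_mem_segment_of_mem_convexHull_union_single hA hx
  simp only [Pi.add_apply, Pi.smul_apply, Pi.single_eq_same, hyj, smul_eq_mul]
  constructor <;> linarith

lemma eq_single_of_mem_convexHull_union_single (hA : ∀ y ∈ A, y j = 0)
    {x : Fin d → ℝ} (hx : x ∈ convexHull ℝ (A ∪ {Pi.single j 1})) (hxj : x j = 1) :
    x = Pi.single j 1 := by
  obtain ⟨y, hyj, θ, μ, hθ, hμ, hθμ, rfl⟩ :=
    exists_mem_segment_of_mem_convexHull_union_single hA hx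
  have hθ1 : θ = 1 := by simpa [hyj] using hxj
  obtain rfl : μ = 0 := by linarith
  simp [hθ1]

lemma exists_eq_single_of_convexHull_range_eq {ι : Type*} (y : ι → Fin d → ℝ)
    (hA : ∀ x ∈ A, x j = 0)
    (h : convexHull ℝ (range y) = convexHull ℝ (A ∪ {Pi.single j 1})) :
    ∃ i, y i = Pi.single j 1 := by
  by_contra! hne
  have hy : ∀ i, y i ∈ convexHull ℝ (A ∪ {Pi.single j 1}) :=
    fun i => h ▸ subset_convexHull ℝ _ (mem_range_self i)
  have hlt : range y ⊆ {x | x j < 1} := by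
    rintro _ ⟨i, rfl⟩
    exact lt_of_le_of_ne (apply_mem_Icc_of_mem_convexHull_union_single hA (hy i)).2
      fun h1 => hne i (eq_single_of_mem_convexHull_union_single hA (hy i) h1)
  have hapex : Pi.single j (1 : ℝ) ∈ convexHull ℝ (range y) :=
    h ▸ subset_convexHull ℝ _ (mem_union_right _ rfl)
  have := convexHull_min hlt (convex_halfSpace_lt (LinearMap.proj j).isLinear 1) hapex
  simp at this

lemma toReal_single (j : Fin d) :
    toReal (Pi.single j (1 : ℤ)) = fun i => if i = j then (1 : ℝ) else 0 := by
  rw [indicator_eq_single]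
  funext i
  by_cases h : i = j <;> simp [toReal, h]

theorem exists_affine_indicator_of_isLatticePyramid {v : Fin (d + 1) → Fin d → ℤ}
    (hv : Function.Injective v) (h : IsLatticePyramid (simplexOf v)) :
    ∃ (c : Fin d → ℤ) (W : ℤ) (p : Fin (d + 1)), ∀ i, v i ⬝ᵥ c + W = if i = p then 1 else 0 := by
  obtain ⟨j, V, hVj, U, w, hU, hQ⟩ := h
  rw [← coe_intAffine, intAffine_image_simplexOf, indicator_eq_single] at hQ
  set y := fun i => toReal (v i ᵥ* U + w)
  have hA : ∀ x ∈ toReal '' (V : Set (Fin d → ℤ)), x j = 0 := by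
    rintro _ ⟨x, hx, rfl⟩
    simp [toReal, hVj x hx]
  have hy_inj : Function.Injective y := by
    have : y = intAffine U w ∘ toReal ∘ v := funext fun i => (intAffine_toReal U w (v i)).symm
    rw [this]
    exact (intAffine_injective hU w).comp (toReal_injective.comp hv)
  have hy : ∀ i, y i ∈ convexHull ℝ (toReal '' (V : Set (Fin d → ℤ)) ∪ {Pi.single j 1}) :=
    fun i => hQ ▸ subset_convexHull ℝ _ (mem_range_self i)
  have hyj : ∀ i, y i j = ((v i ⬝ᵥ (fun k => U k j) + w j : ℤ) : ℝ) := fun i => by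
    simp [y, toReal, vecMul]
  obtain ⟨p, hp⟩ := exists_eq_single_of_convexHull_range_eq y hA hQ.symm
  refine ⟨fun k => U k j, w j, p, fun i => ?_⟩
  split_ifs with hip
  · subst hip
    have hpj := hyj i
    rw [hp, Pi.single_eq_same] at hpj
    exact_mod_cast hpj.symm
  · have hIcc := apply_mem_Icc_of_mem_convexHull_union_single hA (hy i)
    have hne : y i j ≠ 1 := fun h1 =>
      hip (hy_inj ((eq_single_of_mem_convexHull_union_single hA (hy i) h1).trans hp.symm))
    rw [hyj] at hIcc hne
    obtain ⟨h0, h1⟩ := hIcc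
    generalize v i ⬝ᵥ (fun k => U k j) + w j = n at h0 h1 hne
    norm_cast at h0 h1 hne
    omega

/-- The unimodular map takes coordinate `j` to be the functional and translates the other
coordinates so that `v p` lands on `e_j`. -/
theorem isLatticePyramid_of_affine_indicator (v : Fin (d + 1) → Fin d → ℤ) (p : Fin (d + 1))
    {j : Fin d} {c : Fin d → ℤ} (hc : IsUnit (c j)) (W : ℤ)
    (h : ∀ i, v i ⬝ᵥ c + W = if i = p then 1 else 0) : IsLatticePyramid (simplexOf v) := by
  classical
  set U := (1 : Matrix (Fin d) (Fin d) ℤ).updateCol j c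
  set w := Function.update (-v p) j W
  set g := fun i => v i ᵥ* U + w
  have hgj : ∀ i, g i j = v i ⬝ᵥ c + W := fun i => by
    simp [g, U, w, vecMul_updateCol]
  have hgp : g p = Pi.single j 1 := by
    funext t
    by_cases ht : t = j
    · subst ht
      simp [hgj, h]
    · simp [g, U, w, vecMul_updateCol, ht]
  refine ⟨j, (Finset.univ.erase p).image g, ?_, U, w, ?_, ?_⟩
  · intro x hx
    obtain ⟨i, hi, rfl⟩ := Finset.mem_image.1 hx
    simp [hgj, h, Finset.ne_of_mem_erase hi]
  · rwa [det_updateCol_one]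
  · rw [← coe_intAffine, intAffine_image_simplexOf, ← toReal_single, ← hgp]
    rw [← insert_image_compl_eq_range _ p, insert_eq, union_comm]
    simp only [Finset.coe_image, Finset.coe_erase, Finset.coe_univ, image_image,
      ← compl_eq_univ_sdiff]
    rfl

end Pyramid

section DeltaA

variable {n : ℕ} {a : ℕ → ℤ}

lemma forall_vertex_iff {P : Fin (n + 2) → Prop} :
    (∀ i, P i) ↔ P 0 ∧ (∀ k : Fin n, P k.castSucc.succ) ∧ P (Fin.last (n + 1)) := by
  rw [Fin.forall_fin_succ, Fin.forall_fin_succ', Fin.succ_last]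

lemma last_ne_castSucc_succ (k : Fin n) : Fin.last (n + 1) ≠ k.castSucc.succ :=
  Ne.symm (by simp)

lemma simplexVerts_zero : simplexVerts (n + 1) a 0 = 0 := by
  funext t
  simp [simplexVerts]

lemma simplexVerts_castSucc_succ (k : Fin n) :
    simplexVerts (n + 1) a k.castSucc.succ = Pi.single k.castSucc 1 := by
  funext t
  by_cases ht : t = k.castSucc
  · subst ht
    simp [simplexVerts, k.isLt.ne]
  · have : (t : ℕ) ≠ k := fun h => ht (Fin.ext h)
    simp [simplexVerts, ht, this, k.isLt.ne]

lemma simplexVerts_last_dotProduct (c : Fin (n + 1) → ℤ) :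
    simplexVerts (n + 1) a (Fin.last (n + 1)) ⬝ᵥ c
      = ∑ k : Fin n, (a (n + 1) - a (k + 1)) * c k.castSucc + a (n + 1) * c (Fin.last n) := by
  simp [dotProduct, Fin.sum_univ_castSucc, simplexVerts, fun k : Fin n => k.isLt.ne]

lemma simplexVerts_injective (ha : a (n + 1) ≠ 0) :
    Function.Injective (simplexVerts (n + 1) a) := by
  intro p q h
  by_contra hpq
  wlog hlt : p < q generalizing p q
  · exact this h.symm (Ne.symm hpq) (lt_of_le_of_ne (not_lt.1 hlt) (Ne.symm hpq))
  -- the vertices differ in coordinate `q - 1`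
  have hq : (q : ℕ) - 1 < n + 1 := by omega
  have := congrFun h ⟨q - 1, hq⟩
  simp only [simplexVerts] at this
  split_ifs at this <;> omega

/-- Reducing `v_d ⬝ c` modulo `a_d`, its coefficients `a_d - a_k` become `-a_k`. -/
lemma simplexVerts_last_dotProduct_add_sum (c : Fin (n + 1) → ℤ) :
    simplexVerts (n + 1) a (Fin.last (n + 1)) ⬝ᵥ c
        + ∑ k : Fin n, a (k + 1) * (simplexVerts (n + 1) a k.castSucc.succ ⬝ᵥ c)
      = a (n + 1) * ∑ k, c k := by
  simp only [simplexVerts_last_dotProduct, simplexVerts_castSucc_succ, single_dotProduct, one_mul,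
    Fin.sum_univ_castSucc (f := c), mul_add, Finset.mul_sum]
  rw [add_right_comm, ← Finset.sum_add_distrib]
  congr 2
  ext k
  ring

lemma sum_range_succ_eq_add_sum_fin (a : ℕ → ℤ) :
    ∑ i ∈ Finset.range (n + 1), a i = a 0 + ∑ k : Fin n, a (k + 1) := by
  rw [Finset.sum_range_succ', add_comm, Fin.sum_univ_eq_sum_range (fun k => a (k + 1))]

theorem isLatticePyramid_of_mid_eq (m : Fin n) (h : a (m + 1) = a (n + 1)) :
    IsLatticePyramid (simplexOf (simplexVerts (n + 1) a)) := by
  refine isLatticePyramid_of_affine_indicator _ m.castSucc.succ (j := m.castSucc)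
    (c := Pi.single m.castSucc 1)
    (by simp) 0 (forall_vertex_iff.2 ⟨?_, fun k => ?_, ?_⟩)
  · simp [simplexVerts_zero, (Fin.succ_ne_zero _).symm]
  · by_cases hk : k = m <;> simp [simplexVerts_castSucc_succ, hk]
  · rw [add_zero, simplexVerts_last_dotProduct, if_neg (last_ne_castSucc_succ m)]
    simp [Pi.single_apply, h]

theorem isLatticePyramid_of_zero_eq (h : a 0 = a (n + 1))
    (hdvd : a (n + 1) ∣ ∑ i ∈ Finset.range (n + 1), a i + 1) :
    IsLatticePyramid (simplexOf (simplexVerts (n + 1) a)) := by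
  obtain ⟨q, hq⟩ : a (n + 1) ∣ ∑ k : Fin n, a (k + 1) + 1 := by
    rw [sum_range_succ_eq_add_sum_fin, h, add_assoc] at hdvd
    exact (dvd_add_right (dvd_refl _)).1 hdvd
  -- `W = 1` and `c_k = -1` for `k < n` are forced by the values at `v_0` and the `e_k`,
  -- and then `c_n = n - q` by the value at `v_d`
  set c : Fin (n + 1) → ℤ := Fin.lastCases (n - q) fun _ => -1
  obtain ⟨j, hj⟩ : ∃ j, IsUnit (c j) := by
    rcases n with _ | n
    · refine ⟨Fin.last 0, ?_⟩
      simp only [Finset.univ_eq_empty, Finset.sum_empty, zero_add] at hq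
      simpa only [c, Fin.lastCases_last, Nat.cast_zero, zero_sub] using
        (IsUnit.of_mul_eq_one_right _ hq.symm).neg
    · refine ⟨Fin.castSucc 0, ?_⟩
      simpa only [c, Fin.lastCases_castSucc] using isUnit_one.neg
  refine isLatticePyramid_of_affine_indicator _ 0 hj 1 (forall_vertex_iff.2 ⟨?_, fun k => ?_, ?_⟩)
  · simp [simplexVerts_zero]
  · simp [simplexVerts_castSucc_succ, c]
  · simp only [simplexVerts_last_dotProduct, c, Fin.lastCases_castSucc, Fin.lastCases_last,
      Finset.sum_sub_distrib, Finset.sum_const, Finset.card_univ, Fintype.card_fin, nsmul_eq_mul,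
      mul_neg, mul_one, Finset.sum_neg_distrib, if_neg (Fin.last_pos'.ne' : Fin.last (n + 1) ≠ 0)]
    linarith

theorem exists_dvd_of_affine_indicator (hdvd : a (n + 1) ∣ ∑ i ∈ Finset.range (n + 1), a i + 1)
    {c : Fin (n + 1) → ℤ} {W : ℤ} {p : Fin (n + 2)}
    (h : ∀ i, simplexVerts (n + 1) a i ⬝ᵥ c + W = if i = p then 1 else 0) :
    ∃ i < n + 1, a (n + 1) ∣ a i := by
  obtain ⟨h0, hmid, hlast⟩ := forall_vertex_iff.1 h
  simp only [simplexVerts_zero, zero_dotProduct, zero_add] at h0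
  have key : a (n + 1) ∣ ((if Fin.last (n + 1) = p then 1 else 0) - W)
      + ∑ k : Fin n, a (k + 1) * ((if k.castSucc.succ = p then 1 else 0) - W) := by
    refine ⟨∑ k, c k, ?_⟩
    rw [← simplexVerts_last_dotProduct_add_sum, ← hlast]
    simp only [← hmid, add_sub_cancel_right]
  rw [sum_range_succ_eq_add_sum_fin] at hdvd
  obtain rfl | ⟨q, rfl⟩ := Fin.eq_zero_or_eq_succ p
  · simp only [if_true] at h0
    simp only [Fin.succ_ne_zero, Fin.last_pos'.ne', if_false, h0] at key
    refine ⟨0, n.succ_pos, ?_⟩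
    simpa [Finset.sum_neg_distrib] using dvd_add hdvd key
  obtain rfl | ⟨m, rfl⟩ := (Fin.eq_castSucc_or_eq_last q).symm
  · simp only [Fin.succ_last, Fin.zero_eq_last_iff, Nat.add_eq_zero_iff, one_ne_zero, and_false,
      if_false] at h0
    simp only [Fin.succ_last, if_true, h0, sub_zero, Fin.succ_eq_last_succ, Fin.castSucc_ne_last,
      if_false, sub_self, mul_zero, Finset.sum_const_zero, add_zero] at key
    exact ⟨0, n.succ_pos, key.trans (one_dvd _)⟩
  · simp only [(Fin.succ_ne_zero _).symm, if_false] at h0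
    simp only [last_ne_castSucc_succ, if_false, h0, sub_self, Fin.succ_inj, Fin.castSucc_inj,
      sub_zero, mul_ite, mul_one, mul_zero, Finset.sum_ite_eq', Finset.mem_univ, if_true,
      zero_add] at key
    exact ⟨m + 1, by omega, key⟩

end DeltaA

end LatticeSimplex

/-- `Δ(A)` is not a lattice pyramid over any lower-dimensional lattice
simplex iff `1 ≤ a i < a d` for all `0 ≤ i ≤ d-1`, where `a 0` is the integer with
`1 ≤ a 0 ≤ a d` and `a d ∣ a 0 + ⋯ + a (d-1) + 1`. -/
theorem statement5 {d : ℕ} (hd : 1 ≤ d) (a : ℕ → ℤ)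
    (ha : ∀ i, 1 ≤ i → i ≤ d - 1 → 1 ≤ a i ∧ a i ≤ a d)
    (ha0 : 1 ≤ a 0 ∧ a 0 ≤ a d)
    (hdvd : a d ∣ (∑ i ∈ Finset.range d, a i) + 1) :
    ¬ IsLatticePyramid (simplexOf (simplexVerts d a)) ↔
      ∀ i, i < d → 1 ≤ a i ∧ a i < a d := by
  obtain ⟨n, rfl⟩ : ∃ n, d = n + 1 := ⟨d - 1, by omega⟩
  constructor
  · intro hnp i hi
    rcases i with _ | m
    · exact ⟨ha0.1, lt_of_le_of_ne ha0.2 fun heq =>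
        hnp (LatticeSimplex.isLatticePyramid_of_zero_eq heq hdvd)⟩
    · obtain ⟨h1, h2⟩ := ha (m + 1) (by omega) (by omega)
      exact ⟨h1, lt_of_le_of_ne h2 fun heq =>
        hnp (LatticeSimplex.isLatticePyramid_of_mid_eq ⟨m, by omega⟩ heq)⟩
  · intro hlt hpyr
    have hA : a (n + 1) ≠ 0 := by have := hlt 0 n.succ_pos; omega
    obtain ⟨c, W, p, hp⟩ := LatticeSimplex.exists_affine_indicator_of_isLatticePyramid
      (LatticeSimplex.simplexVerts_injective hA) hpyr
    obtain ⟨i, hi, hdvdi⟩ := LatticeSimplex.exists_dvd_of_affine_indicator hdvd hp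
    have hai := hlt i hi
    have := Int.le_of_dvd (by omega) hdvdi
    omega
end
end

section
/- Suppose 1 ≤ a_0,…,a_{d-1} < a_d, r·a_d = a_0 + a_1 + ⋯ + a_{d-1} + 1, and a_i divides a_d for each 0 ≤ i ≤ d−1. Then Δ(A) is Gorenstein of index r; that is, r·Δ(A) − (1,…,1) is a reflexive polytope. -/
/-!
Write `d = e + 1`, `q i = a d / a i` and `P = r • Δ(A) - 𝟙`, whose vertices are
`W i = r • v i - 𝟙`. For each vertex `k` there is an integral vector `U k` with
`W i ⬝ᵥ U k = 1` for `i ≠ k` and `W k ⬝ᵥ U k = 1 - r c k`, where `c k > 0` is `q k` or `a d`;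
this uses `a i * q i = a d` and `r a d = a 0 + ⋯ + a e + 1`. Such a pairing forces
`P = {y | ∀ k, y ⬝ᵥ U k ≤ 1}`, because the matrices with rows `(1, W i)` and columns
`(1, -U k) / (r c k)` are mutually inverse. Consequently the dual of `P` is the lattice simplex
with vertices `U k`, and a lattice point `x` in the interior has `x ⬝ᵥ U k ≤ 0` for all `k`,
so the ray through `x` stays in the bounded set `P` and `x = 0`.
-/

open scoped BigOperators
open MeasureTheory

noncomputable section

open Matrix

/-- `U k` is the normal of the facet of `conv (W i)` opposite `W k`, scaled so that this facet
lies in `{y | y ⬝ᵥ U k = 1}`. -/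
def IsFacetPairing {d : ℕ} (W U : Fin (d + 1) → Fin d → ℝ) (C : Fin (d + 1) → ℝ) : Prop :=
  ∀ i k, W i ⬝ᵥ U k = 1 - if i = k then C k else 0

theorem convex_setOf_dotProduct_le {d : ℕ} (u : Fin d → ℝ) (c : ℝ) :
    Convex ℝ {y : Fin d → ℝ | y ⬝ᵥ u ≤ c} :=
  convex_halfSpace_le ((dotProductBilin ℝ ℝ).flip u).isLinear c

theorem interior_setOf_dotProduct_le {d : ℕ} {u : Fin d → ℝ} (hu : u ≠ 0) (c : ℝ) :
    interior {y : Fin d → ℝ | y ⬝ᵥ u ≤ c} = {y | y ⬝ᵥ u < c} := by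
  let f : (Fin d → ℝ) →L[ℝ] ℝ := LinearMap.toContinuousLinearMap ((dotProductBilin ℝ ℝ).flip u)
  have huu : u ⬝ᵥ u ≠ 0 := fun h => hu (dotProduct_self_eq_zero.mp h)
  have hf : Function.Surjective f := fun t => ⟨(t / (u ⬝ᵥ u)) • u, by
    change ((t / (u ⬝ᵥ u)) • u) ⬝ᵥ u = t
    rw [smul_dotProduct, smul_eq_mul, div_mul_cancel₀ _ huu]⟩
  have := f.interior_preimage hf (Set.Iic c)
  rwa [interior_Iic] at this

theorem polarDual_convexHull_range {ι : Type*} {d : ℕ} (W : ι → Fin d → ℝ) :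
    polarDual (convexHull ℝ (Set.range W)) = {y | ∀ i, W i ⬝ᵥ y ≤ 1} := by
  refine Set.Subset.antisymm (fun y hy i => hy _ (subset_convexHull ℝ _ ⟨i, rfl⟩)) ?_
  intro y hy x hx
  refine convexHull_min ?_ (convex_setOf_dotProduct_le y 1) hx
  rintro _ ⟨i, rfl⟩
  exact hy i

theorem eq_zero_of_forall_nonneg_smul_mem {E : Type*} [NormedAddCommGroup E] [NormedSpace ℝ E]
    {s : Set E} (hs : Bornology.IsBounded s) {x : E} (hx : ∀ t : ℝ, 0 ≤ t → t • x ∈ s) :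
    x = 0 := by
  obtain ⟨R, hR⟩ := hs.exists_norm_le
  have hR0 : 0 ≤ R := by simpa using hR _ (hx 0 le_rfl)
  by_contra hx0
  have hxpos : 0 < ‖x‖ := norm_pos_iff.mpr hx0
  have := hR _ (hx ((R + 1) / ‖x‖) (by positivity))
  rw [norm_smul, Real.norm_of_nonneg (by positivity), div_mul_cancel₀ _ hxpos.ne'] at this
  linarith

theorem toReal_dotProduct {d : ℕ} (v w : Fin d → ℤ) :
    toReal v ⬝ᵥ toReal w = ((v ⬝ᵥ w : ℤ) : ℝ) := by
  simp [toReal, dotProduct]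

namespace IsFacetPairing

variable {d : ℕ} {W U : Fin (d + 1) → Fin d → ℝ} {C : Fin (d + 1) → ℝ}

theorem symm (h : IsFacetPairing W U C) : IsFacetPairing U W C := by
  intro i k
  rw [dotProduct_comm, h k i]
  by_cases hik : i = k
  · subst hik; rfl
  · simp [hik, Ne.symm hik]

theorem normal_ne_zero (h : IsFacetPairing W U C) (hd : 0 < d) (k : Fin (d + 1)) : U k ≠ 0 := by
  have : Nontrivial (Fin (d + 1)) := Fin.nontrivial_iff_two_le.mpr (by omega)
  obtain ⟨i, hik⟩ := exists_ne k
  intro hk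
  simpa [hk, hik] using h i k

theorem barycentric (h : IsFacetPairing W U C) (hC : ∀ k, C k ≠ 0) (y : Fin d → ℝ) :
    ∑ k, (1 - y ⬝ᵥ U k) / C k = 1 ∧ ∑ k, ((1 - y ⬝ᵥ U k) / C k) • W k = y := by
  -- The pairing says that the rows `(1, W i)` and the columns `(1, -U k) / C k` form
  -- inverse matrices; a left inverse of a square matrix is also a right inverse.
  let A : Matrix (Fin (d + 1)) (Fin (d + 1)) ℝ := Matrix.of fun i => vecCons 1 (W i)
  let B : Matrix (Fin (d + 1)) (Fin (d + 1)) ℝ := Matrix.of fun o k => vecCons 1 (-U k) o / C k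
  have hAB : A * B = 1 := by
    ext i k
    have : ∑ o, vecCons 1 (W i) o * vecCons 1 (-U k) o = 1 - W i ⬝ᵥ U k := by
      rw [← dotProduct, cons_dotProduct_cons, dotProduct_neg, one_mul, sub_eq_add_neg]
    simp only [A, B, mul_apply, of_apply, mul_div_assoc', ← Finset.sum_div, this, h i k,
      one_apply]
    split_ifs with hik
    · subst hik; simp [hC i]
    · simp
  have hcoord : vecCons 1 y ᵥ* B = fun k => (1 - y ⬝ᵥ U k) / C k := by
    ext k
    simp [B, vecMul, dotProduct, Fin.sum_univ_succ, mul_div_assoc', ← Finset.sum_div,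
      sub_eq_add_neg]
  have key : (fun k => (1 - y ⬝ᵥ U k) / C k) ᵥ* A = vecCons 1 y := by
    rw [← hcoord, vecMul_vecMul, mul_eq_one_comm.mp hAB, vecMul_one]
  refine ⟨by simpa [A, vecMul, dotProduct] using congrFun key 0, ?_⟩
  ext j
  simpa [A, vecMul, dotProduct, Finset.sum_apply] using congrFun key j.succ

theorem convexHull_eq (h : IsFacetPairing W U C) (hC : ∀ k, 0 < C k) :
    convexHull ℝ (Set.range W) = {y | ∀ k, y ⬝ᵥ U k ≤ 1} := by
  apply subset_antisymm
  · have hconv : Convex ℝ {y : Fin d → ℝ | ∀ k, y ⬝ᵥ U k ≤ 1} := by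
      simpa only [Set.ofPred_forall] using convex_iInter fun k => convex_setOf_dotProduct_le (U k) 1
    refine convexHull_min ?_ hconv
    rintro _ ⟨i, rfl⟩ k
    rw [h i k]
    split_ifs
    · linarith [hC k]
    · simp
  · intro y hy
    obtain ⟨hsum, hy_eq⟩ := h.barycentric (fun k => (hC k).ne') y
    rw [← hy_eq]
    exact (convex_convexHull ℝ _).sum_mem (fun k _ => div_nonneg (by linarith [hy k]) (hC k).le)
      hsum fun k _ => subset_convexHull ℝ _ ⟨k, rfl⟩

theorem interior_convexHull_eq (h : IsFacetPairing W U C) (hC : ∀ k, 0 < C k) (hd : 0 < d) :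
    interior (convexHull ℝ (Set.range W)) = {y | ∀ k, y ⬝ᵥ U k < 1} := by
  rw [h.convexHull_eq hC, Set.ofPred_forall, interior_iInter_of_finite, Set.ofPred_forall]
  exact Set.iInter_congr fun k => interior_setOf_dotProduct_le (h.normal_ne_zero hd k) 1

end IsFacetPairing

theorem IsFacetPairing.isReflexive {d : ℕ} (hd : 0 < d) {W U : Fin (d + 1) → Fin d → ℤ}
    {C : Fin (d + 1) → ℝ} (h : IsFacetPairing (fun i => toReal (W i)) (fun k => toReal (U k)) C)
    (hC : ∀ k, 0 < C k) :
    IsReflexive (convexHull ℝ (Set.range fun i => toReal (W i))) := by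
  have hP := h.convexHull_eq hC
  have hint := h.interior_convexHull_eq hC hd
  refine ⟨by simp [hint], fun x hx hlat => ?_, ⟨Finset.univ.image U, ?_⟩⟩
  · rw [hint] at hx
    choose n hn using hlat
    obtain rfl : x = toReal n := funext hn
    have hnonpos (k : Fin (d + 1)) : toReal n ⬝ᵥ toReal (U k) ≤ 0 := by
      have := hx k
      rw [toReal_dotProduct] at this ⊢
      exact_mod_cast Int.lt_add_one_iff.mp (by exact_mod_cast this)
    refine eq_zero_of_forall_nonneg_smul_mem
      ((Set.finite_range fun i => toReal (W i)).isCompact_convexHull ℝ).isBounded fun t ht => ?_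
    rw [hP]
    intro k
    rw [smul_dotProduct, smul_eq_mul]
    nlinarith [hnonpos k]
  · have himage : toReal '' ↑(Finset.univ.image U) = Set.range fun k => toReal (U k) := by
      ext; simp
    rw [himage, polarDual_convexHull_range, h.symm.convexHull_eq hC]
    simp_rw [dotProduct_comm]

theorem image_smul_add_simplexOf {d : ℕ} (v : Fin (d + 1) → Fin d → ℤ) (r : ℕ) (w : Fin d → ℤ) :
    (fun x => (r : ℝ) • x + toReal w) '' simplexOf v = simplexOf fun i => r • v i + w := by
  let f : (Fin d → ℝ) →ᵃ[ℝ] (Fin d → ℝ) :=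
    ((r : ℝ) • LinearMap.id).toAffineMap + AffineMap.const ℝ _ (toReal w)
  change f '' _ = _
  rw [simplexOf, f.image_convexHull, ← Set.range_comp]
  congr 2
  ext i j
  simp [f, toReal]

section DeltaA

variable {e : ℕ} (r : ℕ) (a : ℕ → ℤ)

/-- With `d = e + 1` and `q i = a d / a i`: the normal of the facet of `r • Δ(A) - 𝟙` opposite
its vertex `k`, namely `q 0 • 𝟙 + ((r - d) q 0 - 1) e_d` for `k = 0`,
`-q k e_k + (q k - 1) e_d` for `0 < k < d`, and `-e_d` for `k = d`. -/
def facetNormal (e r : ℕ) (a : ℕ → ℤ) : Fin (e + 2) → Fin (e + 1) → ℤ :=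
  Fin.cons
    ((a (e + 1) / a 0) • 1 +
      Pi.single (Fin.last e) (((r : ℤ) - (e + 1)) * (a (e + 1) / a 0) - 1))
    (Fin.snoc
      (fun m : Fin e => Pi.single m.castSucc (-(a (e + 1) / a (m + 1))) +
        Pi.single (Fin.last e) (a (e + 1) / a (m + 1) - 1))
      (Pi.single (Fin.last e) (-1)))

/-- The lattice distance of the `k`-th vertex of `Δ(A)` from the opposite facet. -/
def facetDistance (e : ℕ) (a : ℕ → ℤ) : Fin (e + 2) → ℤ :=
  Fin.cons (a (e + 1) / a 0) (Fin.snoc (fun m : Fin e => a (e + 1) / a (m + 1)) (a (e + 1)))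

@[simp] theorem dotProduct_facetNormal_zero (y : Fin (e + 1) → ℤ) :
    y ⬝ᵥ facetNormal e r a 0 = a (e + 1) / a 0 * ∑ j, y j +
      y (Fin.last e) * (((r : ℤ) - (e + 1)) * (a (e + 1) / a 0) - 1) := by
  simp only [facetNormal, Fin.cons_zero, dotProduct_add, dotProduct_smul, dotProduct_one,
    dotProduct_single, smul_eq_mul]

@[simp] theorem dotProduct_facetNormal_castSucc_succ (y : Fin (e + 1) → ℤ) (m : Fin e) :
    y ⬝ᵥ facetNormal e r a m.castSucc.succ =
      -(y m.castSucc * (a (e + 1) / a (m + 1))) +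
        y (Fin.last e) * (a (e + 1) / a (m + 1) - 1) := by
  simp [facetNormal, dotProduct_add, dotProduct_single]

@[simp] theorem dotProduct_facetNormal_last (y : Fin (e + 1) → ℤ) :
    y ⬝ᵥ facetNormal e r a (Fin.last (e + 1)) = -y (Fin.last e) := by
  simp [facetNormal, ← Fin.succ_last, dotProduct_single]

@[simp] theorem facetDistance_zero : facetDistance e a 0 = a (e + 1) / a 0 := rfl

@[simp] theorem facetDistance_castSucc_succ (m : Fin e) :
    facetDistance e a m.castSucc.succ = a (e + 1) / a (m + 1) := by
  simp [facetDistance]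

@[simp] theorem facetDistance_last : facetDistance e a (Fin.last (e + 1)) = a (e + 1) := by
  simp [facetDistance, ← Fin.succ_last]

@[simp] theorem simplexVerts_zero : simplexVerts (e + 1) a 0 = 0 := by
  ext j; simp [simplexVerts]

@[simp] theorem simplexVerts_castSucc_succ (m : Fin e) :
    simplexVerts (e + 1) a m.castSucc.succ = Pi.single m.castSucc 1 := by
  ext j
  simp [simplexVerts, Pi.single_apply, Fin.ext_iff, m.isLt.ne]

@[simp] theorem simplexVerts_last_castSucc (m : Fin e) :
    simplexVerts (e + 1) a (Fin.last (e + 1)) m.castSucc = a (e + 1) - a (m + 1) := by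
  simp [simplexVerts, m.isLt.ne]

@[simp] theorem simplexVerts_last_last :
    simplexVerts (e + 1) a (Fin.last (e + 1)) (Fin.last e) = a (e + 1) := by
  simp [simplexVerts]

theorem sum_simplexVerts_last :
    ∑ j, simplexVerts (e + 1) a (Fin.last (e + 1)) j =
      (e + 1) * a (e + 1) - ∑ m : Fin e, a (m + 1) := by
  simp only [Fin.sum_univ_castSucc, simplexVerts_last_castSucc, simplexVerts_last_last,
    Finset.sum_sub_distrib, Finset.sum_const, Finset.card_univ, Fintype.card_fin, Int.nsmul_eq_mul]
  ring

theorem one_dotProduct_facetNormal (k : Fin (e + 2)) :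
    1 ⬝ᵥ facetNormal e r a k = r * (if k = 0 then a (e + 1) / a 0 else 0) - 1 := by
  induction k using Fin.cases with
  | zero =>
    simp only [dotProduct_facetNormal_zero, Pi.one_apply, Finset.sum_const, Finset.card_univ,
      Fintype.card_fin, Int.nsmul_eq_mul, Nat.cast_add, Nat.cast_one, if_true]
    ring
  | succ k =>
    induction k using Fin.lastCases with
    | last => simp
    | cast m =>
      simp only [dotProduct_facetNormal_castSucc_succ, Pi.one_apply, Fin.succ_ne_zero, if_false]
      ring

theorem simplexVerts_dotProduct_facetNormal (hdvd : ∀ i, i < e + 1 → a i ∣ a (e + 1))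
    (hsum : (r : ℤ) * a (e + 1) = (∑ i ∈ Finset.range (e + 1), a i) + 1) (i k : Fin (e + 2)) :
    simplexVerts (e + 1) a i ⬝ᵥ facetNormal e r a k =
      (if k = 0 then a (e + 1) / a 0 else 0) - if i = k then facetDistance e a k else 0 := by
  have hq (i : ℕ) (hi : i < e + 1) : a i * (a (e + 1) / a i) = a (e + 1) :=
    Int.mul_ediv_cancel' (hdvd i hi)
  have hsum' : (r : ℤ) * a (e + 1) = a 0 + ∑ m : Fin e, a (m + 1) + 1 := by
    rw [hsum, Finset.sum_range_succ', Fin.sum_univ_eq_sum_range (fun m => a (m + 1)),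
      add_comm (a 0)]
  induction i using Fin.cases with
  | zero =>
    rcases eq_or_ne k 0 with rfl | hk
    · simp
    · simp [hk, hk.symm]
  | succ i =>
    induction i using Fin.lastCases with
    | last =>
      induction k using Fin.cases with
      | zero =>
        simp only [Fin.succ_last, dotProduct_facetNormal_zero, sum_simplexVerts_last,
          simplexVerts_last_last, if_true, Fin.last_eq_zero_iff, Nat.succ_ne_zero, if_false,
          sub_zero]
        linear_combination (a (e + 1) / a 0) * hsum' + hq 0 (by omega)
      | succ k =>
        induction k using Fin.lastCases with
        | last => simp
        | cast m =>
          have hne : Fin.last (e + 1) ≠ m.castSucc.succ := by simp [Fin.ext_iff, m.isLt.ne']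
          simp only [Fin.succ_last, dotProduct_facetNormal_castSucc_succ,
            simplexVerts_last_castSucc, simplexVerts_last_last, Fin.succ_ne_zero, hne, if_false,
            zero_sub]
          linear_combination hq (m + 1) (by omega)
    | cast n =>
      induction k using Fin.cases with
      | zero => simp [-single_dotProduct]
      | succ k =>
        induction k using Fin.lastCases with
        | last => simp [-single_dotProduct]
        | cast m => simp [-single_dotProduct, Pi.single_apply, eq_comm]

-- The facet of `Δ(A)` opposite vertex `k` lies at level `h k` (`q 0` for `k = 0`, else `0`), and
-- `𝟙 ⬝ᵥ U k = r h k - 1`: dilating by `r` and translating by `-𝟙` moves every facet to level `1`.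
theorem isFacetPairing_simplexVerts (hdvd : ∀ i, i < e + 1 → a i ∣ a (e + 1))
    (hsum : (r : ℤ) * a (e + 1) = (∑ i ∈ Finset.range (e + 1), a i) + 1) :
    IsFacetPairing (fun i => toReal (r • simplexVerts (e + 1) a i - 1))
      (fun k => toReal (facetNormal e r a k)) (fun k => ((r * facetDistance e a k : ℤ) : ℝ)) := by
  intro i k
  have : (r • simplexVerts (e + 1) a i - 1) ⬝ᵥ facetNormal e r a k =
      1 - if i = k then r * facetDistance e a k else 0 := by
    rw [sub_dotProduct, smul_dotProduct, nsmul_eq_mul,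
      simplexVerts_dotProduct_facetNormal r a hdvd hsum, one_dotProduct_facetNormal]
    split_ifs <;> ring
  rw [toReal_dotProduct, this]
  split_ifs <;> push_cast <;> ring

theorem facetDistance_pos (ha : ∀ i, i < e + 1 → 0 < a i) (hA : 0 < a (e + 1))
    (hdvd : ∀ i, i < e + 1 → a i ∣ a (e + 1)) (k : Fin (e + 2)) : 0 < facetDistance e a k := by
  have hq (i : ℕ) (hi : i < e + 1) : 0 < a (e + 1) / a i :=
    Int.ediv_pos_of_pos_of_dvd hA (ha i hi).le (hdvd i hi)
  induction k using Fin.cases with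
  | zero => exact hq 0 (by omega)
  | succ k =>
    induction k using Fin.lastCases with
    | last => simpa using hA
    | cast m => simpa using hq (m + 1) (by omega)

end DeltaA

/-- if `1 ≤ a i < a d` for `i < d`, each `a i` divides `a d`, and
`r · a d = a 0 + ⋯ + a (d-1) + 1`, then `Δ(A)` is Gorenstein of index `r`; that is,
`r·Δ(A) - (1,…,1)` is reflexive. -/
theorem statement7 {d : ℕ} (hd : 1 ≤ d) (r : ℕ) (hr : 1 ≤ r) (a : ℕ → ℤ)
    (ha : ∀ i, i < d → 1 ≤ a i ∧ a i < a d)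
    (hdvd : ∀ i, i < d → a i ∣ a d)
    (hsum : (r : ℤ) * a d = (∑ i ∈ Finset.range d, a i) + 1) :
    IsGorenstein (simplexOf (simplexVerts d a)) r ∧
      IsReflexive ((fun x => (r : ℝ) • x - 1) '' simplexOf (simplexVerts d a)) := by
  obtain ⟨e, rfl⟩ : ∃ e, d = e + 1 := ⟨d - 1, by omega⟩
  have hpos (i : ℕ) (hi : i < e + 1) : 0 < a i := (ha i hi).1
  have hA : 0 < a (e + 1) := (hpos 0 (by omega)).trans (ha 0 (by omega)).2
  have hC (k : Fin (e + 2)) : (0 : ℝ) < ((r * facetDistance e a k : ℤ) : ℝ) := by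
    exact_mod_cast mul_pos (by omega) (facetDistance_pos a hpos hA hdvd k)
  have hrefl :
      IsReflexive ((fun x => (r : ℝ) • x + toReal (-1)) '' simplexOf (simplexVerts (e + 1) a)) := by
    rw [image_smul_add_simplexOf]
    exact (isFacetPairing_simplexVerts r a hdvd hsum).isReflexive (by omega) hC
  have hshift : (fun x : Fin (e + 1) → ℝ => (r : ℝ) • x - 1) =
      fun x => (r : ℝ) • x + toReal (-1) := by
    ext x j
    simp [toReal, sub_eq_add_neg]
  exact ⟨⟨-1, hrefl⟩, hshift ▸ hrefl⟩
end
end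

section
/- If Δ(A) is Gorenstein of index r with 1 ≤ a_0,…,a_{d-1} < a_d and each a_i | a_d and r·a_d = a_0 + ⋯ + a_{d-1} + 1, then the vertices of the reflexive polytope (r·Δ(A) − (1,…,1))^∨ are: −e_d; −(a_d/a_i)e_i + ((a_d − a_i)/a_i)e_d for 1 ≤ i ≤ d−1; and (a_d/a_0)Σ_{j=1}^{d-1} e_j + (((r−d+1)a_d − a_0)/a_0)e_d. -/
/-
`Q = r·Δ(A) - (1,…,1)` is the simplex with vertices `u k = r • v k - 1`, and the relation
`r a_d = a_0 + ⋯ + a_{d-1} + 1` says exactly that the origin has the positive barycentric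
coordinates `ν = (a_0, …, a_{d-1}, 1) / (r a_d)` in it. For such a simplex, if `w l` solves
`⟨u k, w⟩ = 1` for `k ≠ l`, then `⟨u l, w l⟩ = 1 - 1 / ν l` and every `y` is the affine combination
`∑ l, ν l (1 - ⟨u l, y⟩) • w l`, whose coefficients are nonnegative exactly on the polar `Q^∨`.
Hence `Q^∨ = conv w` with the `w l` as vertices. By the barycentric relation the pairings of the
given `w` need only be checked against `u 0 = -1` and `u k = r e_k - 1` for `0 < k < d`.
-/

open scoped BigOperators
open MeasureTheory

noncomputable section

lemma image_convexHull_smul_sub_one {d : ℕ} (c : ℝ) (s : Set (Fin d → ℝ)) :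
    (fun x => c • x - 1) '' convexHull ℝ s = convexHull ℝ ((fun x => c • x - 1) '' s) :=
  AffineMap.image_convexHull
    ⟨fun x => c • x - 1, c • LinearMap.id, fun p v => by simp [smul_add, add_sub_assoc]⟩ s

lemma convex_polarDual {d : ℕ} (P : Set (Fin d → ℝ)) : Convex ℝ (polarDual P) := by
  intro y hy z hz p q hp hq hpq x hx
  have hxy : x ⬝ᵥ y ≤ 1 := hy x hx
  have hxz : x ⬝ᵥ z ≤ 1 := hz x hx
  change x ⬝ᵥ (p • y + q • z) ≤ 1
  rw [dotProduct_add, dotProduct_smul, dotProduct_smul, smul_eq_mul, smul_eq_mul]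
  nlinarith

lemma mem_polarDual_convexHull_range_iff {ι : Type*} {d : ℕ} (u : ι → Fin d → ℝ)
    (y : Fin d → ℝ) : y ∈ polarDual (convexHull ℝ (Set.range u)) ↔ ∀ k, u k ⬝ᵥ y ≤ 1 := by
  have hconv : Convex ℝ {x : Fin d → ℝ | x ⬝ᵥ y ≤ 1} :=
    convex_halfSpace_le (f := fun x => x ⬝ᵥ y) ⟨fun x x' => add_dotProduct x x' y,
      fun c x => smul_dotProduct c x y⟩ 1
  refine ⟨fun hy k => hy _ (subset_convexHull ℝ _ ⟨k, rfl⟩), fun hy => ?_⟩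
  exact (hconv.convexHull_subset_iff.2 (Set.range_subset_iff.2 hy) :)

lemma sum_weight_mul_dotProduct_eq_zero {ι : Type*} [Fintype ι] {d : ℕ} {u : ι → Fin d → ℝ}
    {ν : ι → ℝ} (hsum : ∑ k, ν k • u k = 0) (y : Fin d → ℝ) :
    ∑ k, ν k * (u k ⬝ᵥ y) = 0 := by
  simp_rw [← smul_eq_mul, ← smul_dotProduct, ← sum_dotProduct, hsum, zero_dotProduct]

/-- `ν` are barycentric coordinates of the origin in the simplex `conv u`, and `w l` lies on
the hyperplanes `⟨u k, ·⟩ = 1` for all `k ≠ l`. -/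
structure IsPolarPair {ι : Type*} [Fintype ι] [DecidableEq ι] {d : ℕ}
    (u : ι → Fin d → ℝ) (ν : ι → ℝ) (w : ι → Fin d → ℝ) : Prop where
  weight_pos : ∀ k, 0 < ν k
  sum_weight : ∑ k, ν k = 1
  sum_weight_smul : ∑ k, ν k • u k = 0
  eq_zero_of_dotProduct_eq_zero : ∀ z, (∀ k, u k ⬝ᵥ z = 0) → z = 0
  dotProduct_eq : ∀ k l, u k ⬝ᵥ w l = if k = l then 1 - 1 / ν k else 1

section PolarPair

variable {ι : Type*} [Fintype ι] [DecidableEq ι] {d : ℕ}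
  {u : ι → Fin d → ℝ} {ν : ι → ℝ} {w : ι → Fin d → ℝ}

lemma dotProduct_eq_ite_of_ne (hpos : ∀ k, 0 < ν k) (hsum1 : ∑ k, ν k = 1)
    (hsum : ∑ k, ν k • u k = 0) (k₀ l : ι)
    (h : ∀ k ≠ k₀, u k ⬝ᵥ w l = if k = l then 1 - 1 / ν k else 1) :
    u k₀ ⬝ᵥ w l = if k₀ = l then 1 - 1 / ν k₀ else 1 := by
  set f : ι → ℝ := fun k => if k = l then 1 - 1 / ν k else 1
  have hf : ∑ k, ν k * f k = 0 := by
    have : ∀ k, ν k * f k = ν k - if k = l then 1 else 0 := fun k => by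
      by_cases hk : k = l
      · subst hk; simp [f, mul_sub, (hpos k).ne']
      · simp [f, hk]
    simp [this, Finset.sum_sub_distrib, hsum1]
  have hzero : ∑ k, ν k * (u k ⬝ᵥ w l - f k) = 0 := by
    simp [mul_sub, Finset.sum_sub_distrib, sum_weight_mul_dotProduct_eq_zero hsum, hf]
  rw [Finset.sum_eq_single k₀ (fun k _ hk => by simp [h k hk, f]) (by simp)] at hzero
  have := (mul_eq_zero.1 hzero).resolve_left (hpos k₀).ne'
  exact sub_eq_zero.1 this

namespace IsPolarPair

lemma sum_coeff_eq_one (h : IsPolarPair u ν w) (y : Fin d → ℝ) :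
    ∑ l, ν l * (1 - u l ⬝ᵥ y) = 1 := by
  simp [mul_sub, Finset.sum_sub_distrib, h.sum_weight,
    sum_weight_mul_dotProduct_eq_zero h.sum_weight_smul]

lemma eq_sum_coeff_smul (h : IsPolarPair u ν w) (y : Fin d → ℝ) :
    y = ∑ l, (ν l * (1 - u l ⬝ᵥ y)) • w l := by
  set t : ι → ℝ := fun l => ν l * (1 - u l ⬝ᵥ y)
  have hpair (k : ι) : u k ⬝ᵥ ∑ l, t l • w l = u k ⬝ᵥ y := by
    have hterm : ∀ l, t l * (u k ⬝ᵥ w l) = t l - if l = k then t l / ν k else 0 := fun l => by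
      by_cases hl : l = k
      · subst hl; simp [h.dotProduct_eq, mul_sub, div_eq_mul_inv]
      · simp [h.dotProduct_eq, hl, Ne.symm hl]
    simp only [dotProduct_sum, dotProduct_smul, smul_eq_mul, hterm, Finset.sum_sub_distrib,
      Finset.sum_ite_eq', Finset.mem_univ, if_true]
    rw [h.sum_coeff_eq_one y]
    field_simp [(h.weight_pos k).ne', t]
    ring
  refine (sub_eq_zero.1 (h.eq_zero_of_dotProduct_eq_zero _ fun k => ?_)).symm
  rw [dotProduct_sub, hpair, sub_self]

lemma mem_polarDual (h : IsPolarPair u ν w) (l : ι) :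
    w l ∈ polarDual (convexHull ℝ (Set.range u)) := by
  rw [mem_polarDual_convexHull_range_iff]
  intro k
  rw [h.dotProduct_eq]
  split_ifs
  · linarith [one_div_pos.2 (h.weight_pos k)]
  · exact le_rfl

lemma polarDual_eq (h : IsPolarPair u ν w) :
    polarDual (convexHull ℝ (Set.range u)) = convexHull ℝ (Set.range w) := by
  refine subset_antisymm (fun y hy => ?_) <|
    (convex_polarDual _).convexHull_subset_iff.2 (Set.range_subset_iff.2 h.mem_polarDual)
  rw [mem_polarDual_convexHull_range_iff] at hy
  rw [h.eq_sum_coeff_smul y]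
  refine (convex_convexHull ℝ _).sum_mem (fun l _ => ?_) (h.sum_coeff_eq_one y)
    (fun l _ => subset_convexHull ℝ _ ⟨l, rfl⟩)
  exact mul_nonneg (h.weight_pos l).le (sub_nonneg.2 (hy l))

lemma eq_of_dotProduct_eq_one (h : IsPolarPair u ν w) {l : ι} {x : Fin d → ℝ}
    (hx : ∀ k ≠ l, u k ⬝ᵥ x = 1) : x = w l := by
  have hcoeff : ∀ k ≠ l, ν k * (1 - u k ⬝ᵥ x) = 0 := fun k hk => by simp [hx k hk]
  have hl : ν l * (1 - u l ⬝ᵥ x) = 1 := by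
    simpa [Finset.sum_eq_single l (fun k _ hk => hcoeff k hk)] using h.sum_coeff_eq_one x
  rw [h.eq_sum_coeff_smul x, Finset.sum_eq_single l (fun k _ hk => by simp [hcoeff k hk])
    (by simp), hl, one_smul]

/-- On a segment through `w l` inside the polar, the constraints tight at `w l` stay tight. -/
lemma mem_extremePoints (h : IsPolarPair u ν w) (l : ι) :
    w l ∈ Set.extremePoints ℝ (polarDual (convexHull ℝ (Set.range u))) := by
  refine _root_.mem_extremePoints.2 ⟨h.mem_polarDual l, fun x₁ hx₁ x₂ hx₂ hseg => ?_⟩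
  obtain ⟨p, q, hp, hq, hpq, hw⟩ := hseg
  rw [mem_polarDual_convexHull_range_iff] at hx₁ hx₂
  have htight : ∀ k ≠ l, u k ⬝ᵥ x₁ = 1 ∧ u k ⬝ᵥ x₂ = 1 := fun k hk => by
    have hkl := h.dotProduct_eq k l
    rw [if_neg hk, ← hw, dotProduct_add, dotProduct_smul, dotProduct_smul, smul_eq_mul,
      smul_eq_mul] at hkl
    have h₁ := hx₁ k
    have h₂ := hx₂ k
    constructor <;> nlinarith
  exact ⟨h.eq_of_dotProduct_eq_one fun k hk => (htight k hk).1,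
    h.eq_of_dotProduct_eq_one fun k hk => (htight k hk).2⟩

end IsPolarPair

end PolarPair

namespace DeltaA

def shiftedVerts (d r : ℕ) (a : ℕ → ℤ) (k : Fin (d + 1)) : Fin d → ℝ :=
  (r : ℝ) • toReal (simplexVerts d a k) - 1

def baryNum (d : ℕ) (a : ℕ → ℤ) (k : Fin (d + 1)) : ℤ := if (k : ℕ) = d then 1 else a k

def baryWeight (d r : ℕ) (a : ℕ → ℤ) (k : Fin (d + 1)) : ℝ := baryNum d a k / (r * a d)

/-- The family `w` of the statement. `w i` lies on the hyperplanes `⟨shiftedVerts k, ·⟩ = 1` for all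
`k` except `k = d` if `i = 0`, `k = 0` if `i = d`, and `k = i` otherwise, whence the reindexing by
`Equiv.swap 0 (Fin.last d)` below. -/
def dualVerts (d r : ℕ) (a : ℕ → ℤ) : Fin (d + 1) → Fin d → ℝ := fun i j =>
  if (i : ℕ) = 0 then (if (j : ℕ) = d - 1 then -1 else 0)
  else if (i : ℕ) = d then
    (if (j : ℕ) = d - 1 then (((r : ℤ) - d + 1) * a d - a 0 : ℤ) / (a 0 : ℝ)
     else (a d : ℝ) / (a 0 : ℝ))
  else
    (if (j : ℕ) + 1 = (i : ℕ) then -(a d : ℝ) / (a (i : ℕ) : ℝ)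
     else if (j : ℕ) = d - 1 then ((a d - a (i : ℕ) : ℤ) : ℝ) / (a (i : ℕ) : ℝ)
     else 0)

lemma sum_baryNum (d : ℕ) (a : ℕ → ℤ) :
    ∑ k, baryNum d a k = (∑ i ∈ Finset.range d, a i) + 1 := by
  rw [Fin.sum_univ_castSucc, ← Fin.sum_univ_eq_sum_range]
  simp [baryNum, Fin.val_last, fun i : Fin d => i.isLt.ne]

lemma sum_baryNum_mul_simplexVerts (d : ℕ) (a : ℕ → ℤ) (j : Fin d) :
    ∑ k, baryNum d a k * simplexVerts d a k j = a d := by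
  have hmid (k : Fin d) : baryNum d a k.castSucc * simplexVerts d a k.castSucc j =
      if (j : ℕ) + 1 = k then a ((j : ℕ) + 1) else 0 := by
    by_cases hk : (j : ℕ) + 1 = k
    · have hk0 : (k : ℕ) ≠ 0 := by omega
      simp [baryNum, simplexVerts, k.isLt.ne, hk0, hk]
    · simp [baryNum, simplexVerts, k.isLt.ne, hk]
  have hd : d ≠ 0 := j.pos.ne'
  rw [Fin.sum_univ_castSucc, Finset.sum_congr rfl fun k _ => hmid k]
  by_cases hj : (j : ℕ) + 1 = d
  · rw [Finset.sum_eq_zero fun k _ => if_neg (by omega)]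
    have hj' : (j : ℕ) = d - 1 := by omega
    simp [baryNum, simplexVerts, hd, hj']
  · rw [Finset.sum_eq_single ⟨(j : ℕ) + 1, by omega⟩
      (fun k _ hk => if_neg fun h => hk (Fin.ext h.symm)) (by simp)]
    have hj' : (j : ℕ) ≠ d - 1 := by omega
    simp [baryNum, simplexVerts, hd, hj']

section

variable {d r : ℕ} {a : ℕ → ℤ}

lemma coeff_pos (ha : ∀ i, i < d → 1 ≤ a i ∧ a i < a d) {i : ℕ} (hi : i < d) :
    (0 : ℝ) < a i := by
  exact_mod_cast (ha i hi).1

lemma coeff_last_pos (hd : 1 ≤ d) (ha : ∀ i, i < d → 1 ≤ a i ∧ a i < a d) : (0 : ℝ) < a d := by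
  have h0 := ha 0 hd
  exact_mod_cast (show (0 : ℤ) < a d by omega)

lemma baryWeight_pos (hd : 1 ≤ d) (hr : 1 ≤ r) (ha : ∀ i, i < d → 1 ≤ a i ∧ a i < a d)
    (k : Fin (d + 1)) : 0 < baryWeight d r a k := by
  have hnum : (0 : ℝ) < baryNum d a k := by
    unfold baryNum
    split_ifs with hk
    · norm_num
    · exact_mod_cast coeff_pos ha (by omega : (k : ℕ) < d)
  exact div_pos hnum (mul_pos (by exact_mod_cast hr) (coeff_last_pos hd ha))

lemma sum_baryWeight (hd : 1 ≤ d) (hr : 1 ≤ r) (ha : ∀ i, i < d → 1 ≤ a i ∧ a i < a d)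
    (hsum : (r : ℤ) * a d = (∑ i ∈ Finset.range d, a i) + 1) : ∑ k, baryWeight d r a k = 1 := by
  have hne : (r : ℝ) * a d ≠ 0 := (mul_pos (by exact_mod_cast hr) (coeff_last_pos hd ha)).ne'
  simp only [baryWeight, ← Finset.sum_div]
  rw [← Int.cast_sum, sum_baryNum, ← hsum, div_eq_one_iff_eq hne]
  push_cast
  rfl

lemma sum_baryWeight_smul_shiftedVerts (hd : 1 ≤ d) (hr : 1 ≤ r)
    (ha : ∀ i, i < d → 1 ≤ a i ∧ a i < a d)
    (hsum : (r : ℤ) * a d = (∑ i ∈ Finset.range d, a i) + 1) :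
    ∑ k, baryWeight d r a k • shiftedVerts d r a k = 0 := by
  have hne : (r : ℝ) * a d ≠ 0 := (mul_pos (by exact_mod_cast hr) (coeff_last_pos hd ha)).ne'
  funext j
  have hnum : ∑ k, (baryNum d a k : ℝ) * simplexVerts d a k j = a d := by
    exact_mod_cast sum_baryNum_mul_simplexVerts d a j
  calc (∑ k, baryWeight d r a k • shiftedVerts d r a k) j
      = (r * ∑ k, (baryNum d a k : ℝ) * simplexVerts d a k j) / (r * a d)
          - ∑ k, baryWeight d r a k := by
        simp only [Finset.sum_apply, Pi.smul_apply, shiftedVerts, baryWeight, toReal,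
          Pi.sub_apply, Pi.one_apply, smul_eq_mul, Finset.mul_sum, Finset.sum_div,
          ← Finset.sum_sub_distrib]
        refine Finset.sum_congr rfl fun k _ => ?_
        ring
    _ = 0 := by rw [hnum, div_self hne, sum_baryWeight hd hr ha hsum, sub_self]

lemma shiftedVerts_zero_dotProduct (y : Fin d → ℝ) :
    shiftedVerts d r a 0 ⬝ᵥ y = -∑ j, y j := by
  have hv : toReal (simplexVerts d a 0) = 0 := by
    funext j
    simp [toReal, simplexVerts]
  simp [shiftedVerts, hv, one_dotProduct]

lemma shiftedVerts_succ_dotProduct (j : Fin d) (hj : (j : ℕ) + 1 < d) (y : Fin d → ℝ) :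
    shiftedVerts d r a ⟨(j : ℕ) + 1, by omega⟩ ⬝ᵥ y = r * y j - ∑ j, y j := by
  have hv : toReal (simplexVerts d a ⟨(j : ℕ) + 1, by omega⟩) = Pi.single j 1 := by
    funext j'
    simp [toReal, simplexVerts, hj.ne, Pi.single_apply, Fin.ext_iff]
  simp [shiftedVerts, hv, sub_dotProduct, one_dotProduct, smul_dotProduct, single_dotProduct]

lemma eq_zero_of_shiftedVerts_dotProduct_eq_zero (hr : 1 ≤ r) (z : Fin d → ℝ)
    (hz : ∀ k, shiftedVerts d r a k ⬝ᵥ z = 0) : z = 0 := by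
  have hsum : ∑ j, z j = 0 := by
    simpa [shiftedVerts_zero_dotProduct] using hz 0
  have hmid (j : Fin d) (hj : (j : ℕ) + 1 < d) : z j = 0 := by
    have := hz ⟨(j : ℕ) + 1, by omega⟩
    rw [shiftedVerts_succ_dotProduct j hj, hsum, sub_zero] at this
    exact (mul_eq_zero.1 this).resolve_left (by positivity)
  funext j
  by_cases hj : (j : ℕ) + 1 < d
  · exact hmid j hj
  · have hothers (k : Fin d) (hk : k ≠ j) : z k = 0 :=
      hmid k (by have := k.isLt; have := Fin.val_ne_of_ne hk; omega)
    rw [Pi.zero_apply, ← hsum, Finset.sum_eq_single j (fun k _ hk => hothers k hk) (by simp)]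

lemma eq_zero_or_eq_last_or_eq_succ (i : Fin (d + 1)) :
    i = 0 ∨ i = Fin.last d ∨ ∃ j : Fin d, ∃ hj : (j : ℕ) + 1 < d, i = ⟨(j : ℕ) + 1, by omega⟩ := by
  rcases i with ⟨_ | m, hm⟩
  · exact Or.inl rfl
  · by_cases hmd : m + 1 = d
    · exact Or.inr (Or.inl (Fin.ext hmd))
    · exact Or.inr (Or.inr ⟨⟨m, by omega⟩, by simp; omega, rfl⟩)

lemma dualVerts_zero (hd : 1 ≤ d) : dualVerts d r a 0 = Pi.single ⟨d - 1, by omega⟩ (-1) := by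
  funext j
  simp [dualVerts, Pi.single_apply, Fin.ext_iff]

lemma dualVerts_succ (j : Fin d) (hj : (j : ℕ) + 1 < d) :
    dualVerts d r a ⟨(j : ℕ) + 1, by omega⟩ = Pi.single j (-(a d : ℝ) / a ((j : ℕ) + 1)) +
      Pi.single ⟨d - 1, by omega⟩ ((a d - a ((j : ℕ) + 1) : ℝ) / a ((j : ℕ) + 1)) := by
  funext j'
  by_cases h₁ : j' = j
  · have hj' : (j : ℕ) ≠ d - 1 := by omega
    subst h₁
    simp [dualVerts, hj.ne, hj', Fin.ext_iff]
  · have h₂ : (j' : ℕ) ≠ j := Fin.val_ne_of_ne h₁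
    simp [dualVerts, hj.ne, h₂, Pi.single_apply, Fin.ext_iff]

lemma dualVerts_last (hd : 1 ≤ d) :
    dualVerts d r a (Fin.last d) = ((a d : ℝ) / a 0) • 1 + Pi.single ⟨d - 1, by omega⟩
      ((((r : ℤ) - d + 1) * a d - a 0 : ℤ) / (a 0 : ℝ) - a d / a 0) := by
  have hd0 : d ≠ 0 := by omega
  funext j
  by_cases hj : (j : ℕ) = d - 1 <;> simp [dualVerts, hj, hd0, Pi.single_apply, Fin.ext_iff]

lemma swap_zero_last_succ (j : Fin d) (hj : (j : ℕ) + 1 < d) :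
    Equiv.swap 0 (Fin.last d) ⟨(j : ℕ) + 1, by omega⟩ = ⟨(j : ℕ) + 1, by omega⟩ :=
  Equiv.swap_apply_of_ne_of_ne (by simp [Fin.ext_iff]) (by simp [Fin.ext_iff]; omega)

lemma shiftedVerts_dotProduct_dualVerts (hd : 1 ≤ d)
    (ha : ∀ i, i < d → 1 ≤ a i ∧ a i < a d) (k i : Fin (d + 1)) (hk : k ≠ Fin.last d) :
    shiftedVerts d r a k ⬝ᵥ dualVerts d r a i =
      if k = Equiv.swap 0 (Fin.last d) i then 1 - 1 / baryWeight d r a k else 1 := by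
  have h0 : (a 0 : ℝ) ≠ 0 := (coeff_pos ha (by omega)).ne'
  have hd0 : d ≠ 0 := by omega
  have hlast : (0 : Fin (d + 1)) ≠ Fin.last d := by simp [Fin.ext_iff]; omega
  rcases eq_zero_or_eq_last_or_eq_succ k with rfl | rfl | ⟨j', hj', rfl⟩
  · rcases eq_zero_or_eq_last_or_eq_succ i with rfl | rfl | ⟨j, hj, rfl⟩
    · rw [shiftedVerts_zero_dotProduct, dualVerts_zero hd]
      simp [Equiv.swap_apply_left, hlast]
    · rw [shiftedVerts_zero_dotProduct, dualVerts_last hd]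
      simp [Equiv.swap_apply_right, baryWeight, baryNum, Finset.sum_add_distrib, Ne.symm hd0]
      field_simp
      ring
    · have hj0 : (0 : Fin (d + 1)) ≠ ⟨(j : ℕ) + 1, by omega⟩ := by simp [Fin.ext_iff]
      have haj : (a ((j : ℕ) + 1) : ℝ) ≠ 0 := (coeff_pos ha hj).ne'
      rw [shiftedVerts_zero_dotProduct, dualVerts_succ j hj, swap_zero_last_succ j hj]
      simp [Finset.sum_add_distrib, hj0]
      field_simp
      ring
  · exact absurd rfl hk
  · have hj'd : j' ≠ ⟨d - 1, by omega⟩ := by simp [Fin.ext_iff]; omega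
    have haj' : (a ((j' : ℕ) + 1) : ℝ) ≠ 0 := (coeff_pos ha hj').ne'
    have hk0 : (⟨(j' : ℕ) + 1, by omega⟩ : Fin (d + 1)) ≠ 0 := by simp [Fin.ext_iff]
    rcases eq_zero_or_eq_last_or_eq_succ i with rfl | rfl | ⟨j, hj, rfl⟩
    · rw [shiftedVerts_succ_dotProduct j' hj', dualVerts_zero hd]
      simp [Equiv.swap_apply_left, hk, hj'd]
    · rw [shiftedVerts_succ_dotProduct j' hj', dualVerts_last hd]
      simp [Equiv.swap_apply_right, Finset.sum_add_distrib, hj'd, hk0]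
      field_simp
      ring
    · rw [shiftedVerts_succ_dotProduct j' hj', dualVerts_succ j hj, swap_zero_last_succ j hj]
      by_cases hjj : j' = j
      · subst hjj
        simp [Finset.sum_add_distrib, hj'd, baryWeight, baryNum, hj'.ne]
        field_simp
        ring
      · have hne : (⟨(j' : ℕ) + 1, by omega⟩ : Fin (d + 1)) ≠ ⟨(j : ℕ) + 1, by omega⟩ := by
          simpa [Fin.ext_iff] using hjj
        have haj : (a ((j : ℕ) + 1) : ℝ) ≠ 0 := (coeff_pos ha hj).ne'
        simp [Finset.sum_add_distrib, hj'd, hjj, hne]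
        field_simp
        ring

lemma isPolarPair (hd : 1 ≤ d) (hr : 1 ≤ r) (ha : ∀ i, i < d → 1 ≤ a i ∧ a i < a d)
    (hsum : (r : ℤ) * a d = (∑ i ∈ Finset.range d, a i) + 1) :
    IsPolarPair (shiftedVerts d r a) (baryWeight d r a)
      (dualVerts d r a ∘ Equiv.swap 0 (Fin.last d)) where
  weight_pos := baryWeight_pos hd hr ha
  sum_weight := sum_baryWeight hd hr ha hsum
  sum_weight_smul := sum_baryWeight_smul_shiftedVerts hd hr ha hsum
  eq_zero_of_dotProduct_eq_zero := eq_zero_of_shiftedVerts_dotProduct_eq_zero hr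
  dotProduct_eq k l := by
    have hpair (k : Fin (d + 1)) (hk : k ≠ Fin.last d) :
        shiftedVerts d r a k ⬝ᵥ (dualVerts d r a ∘ Equiv.swap 0 (Fin.last d)) l =
          if k = l then 1 - 1 / baryWeight d r a k else 1 := by
      simpa using shiftedVerts_dotProduct_dualVerts hd ha k (Equiv.swap 0 (Fin.last d) l) hk
    -- Only `u (Fin.last d)` has non-trivial coordinates; its pairings follow from the others.
    by_cases hk : k = Fin.last d
    · subst hk
      exact dotProduct_eq_ite_of_ne (baryWeight_pos hd hr ha) (sum_baryWeight hd hr ha hsum)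
        (sum_baryWeight_smul_shiftedVerts hd hr ha hsum) _ l hpair
    · exact hpair k hk

end

end DeltaA

theorem statement9_general {d : ℕ} (hd : 1 ≤ d) (r : ℕ) (hr : 1 ≤ r) (a : ℕ → ℤ)
    (ha : ∀ i, i < d → 1 ≤ a i ∧ a i < a d)
    (hsum : (r : ℤ) * a d = (∑ i ∈ Finset.range d, a i) + 1) :
    let Q : Set (Fin d → ℝ) := (fun x => (r : ℝ) • x - 1) '' simplexOf (simplexVerts d a)
    let w : Fin (d + 1) → Fin d → ℝ := fun i j =>
      if (i : ℕ) = 0 then (if (j : ℕ) = d - 1 then -1 else 0)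
      else if (i : ℕ) = d then
        (if (j : ℕ) = d - 1 then (((r : ℤ) - d + 1) * a d - a 0 : ℤ) / (a 0 : ℝ)
         else (a d : ℝ) / (a 0 : ℝ))
      else
        (if (j : ℕ) + 1 = (i : ℕ) then -(a d : ℝ) / (a (i : ℕ) : ℝ)
         else if (j : ℕ) = d - 1 then ((a d - a (i : ℕ) : ℤ) : ℝ) / (a (i : ℕ) : ℝ)
         else 0)
    polarDual Q = convexHull ℝ (Set.range w) ∧
      ∀ i, w i ∈ Set.extremePoints ℝ (polarDual Q) := by
  intro Q w
  have hQ : Q = convexHull ℝ (Set.range (DeltaA.shiftedVerts d r a)) := by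
    simp only [Q, simplexOf, image_convexHull_smul_sub_one, ← Set.range_comp]
    rfl
  have h := DeltaA.isPolarPair hd hr ha hsum
  have hw : Set.range (DeltaA.dualVerts d r a ∘ Equiv.swap 0 (Fin.last d)) = Set.range w :=
    EquivLike.range_comp _ _
  rw [hQ]
  refine ⟨by rw [h.polarDual_eq, hw], fun i => ?_⟩
  have hi := h.mem_extremePoints (Equiv.swap 0 (Fin.last d) i)
  rwa [Function.comp_apply, Equiv.swap_apply_self] at hi

/-- the vertices of the dual reflexive simplex `(r·Δ(A) - (1,…,1))^∨`. -/
theorem statement9 {d : ℕ} (hd : 1 ≤ d) (r : ℕ) (hr : 1 ≤ r) (a : ℕ → ℤ)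
    (ha : ∀ i, i < d → 1 ≤ a i ∧ a i < a d)
    (hdvd : ∀ i, i < d → a i ∣ a d)
    (hsum : (r : ℤ) * a d = (∑ i ∈ Finset.range d, a i) + 1) :
    let Q : Set (Fin d → ℝ) := (fun x => (r : ℝ) • x - 1) '' simplexOf (simplexVerts d a)
    let w : Fin (d + 1) → Fin d → ℝ := fun i j =>
      if (i : ℕ) = 0 then (if (j : ℕ) = d - 1 then -1 else 0)
      else if (i : ℕ) = d then
        (if (j : ℕ) = d - 1 then (((r : ℤ) - d + 1) * a d - a 0 : ℤ) / (a 0 : ℝ)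
         else (a d : ℝ) / (a 0 : ℝ))
      else
        (if (j : ℕ) + 1 = (i : ℕ) then -(a d : ℝ) / (a (i : ℕ) : ℝ)
         else if (j : ℕ) = d - 1 then ((a d - a (i : ℕ) : ℤ) : ℝ) / (a (i : ℕ) : ℝ)
         else 0)
    polarDual Q = convexHull ℝ (Set.range w) ∧
      ∀ i, w i ∈ Set.extremePoints ℝ (polarDual Q) :=
  statement9_general hd r hr a ha hsum
end
end

section
/- Let p, q be prime numbers, a_s = p, b_d = q, and suppose Δ(A,B) is Gorenstein of some index r. Then b_s = 0 or b_s = q − 1. -/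
open scoped BigOperators
open MeasureTheory

noncomputable section

/-!
Write the reflexive polytope as `Q = r • Δ + w`. Let `u` be an integral normal of a facet
of `Δ` through `v 0 = 0`, with `Δ ⊆ {⟨x, u⟩ ≤ 0}`; then the corresponding facet of `Q` lies on
`⟨x, u⟩ = ⟨w, u⟩`, and `u / ⟨w, u⟩` is the vertex of the polar dual `Q*` dual to it. As `Q*` is
a lattice polytope and `0` is interior to `Q`, `⟨w, u⟩` is a positive divisor of every
coordinate of `u`.

For `Δ(A,B)`, the facet opposite `v_d` has normal `-e_d`, which forces `w_d = -1`. The facet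
opposite `v_s` has normal `-q e_s + b_s e_d`, so `H = q (-w_s) - b_s` is a positive common
divisor of `q` and `b_s`. If `0 < b_s < q`, primality of `q` gives `H = 1`, i.e.
`q (-w_s) = b_s + 1 ≤ q`, whence `b_s = q - 1`.
-/

section Polar

variable {d : ℕ}

lemma toReal_dotProduct_toReal (x y : Fin d → ℤ) :
    toReal x ⬝ᵥ toReal y = ((x ⬝ᵥ y : ℤ) : ℝ) := by
  simp [toReal, dotProduct]

@[simp]
lemma toReal_zero : toReal (0 : Fin d → ℤ) = 0 := by
  funext j
  simp [toReal]

lemma toReal_ne_zero {x : Fin d → ℤ} (hx : x ≠ 0) : toReal x ≠ 0 := by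
  contrapose! hx
  funext j
  simpa [toReal] using congrFun hx j

lemma dotProduct_nonpos_of_mem_simplexOf {v : Fin (d + 1) → Fin d → ℤ} {u : Fin d → ℝ}
    (hv : ∀ i, toReal (v i) ⬝ᵥ u ≤ 0) {x : Fin d → ℝ} (hx : x ∈ simplexOf v) : x ⬝ᵥ u ≤ 0 :=
  convexHull_min (t := {x | x ⬝ᵥ u ≤ 0}) (by rintro _ ⟨i, rfl⟩; exact hv i)
    (convex_halfSpace_le (𝕜 := ℝ)
      ⟨fun x y => add_dotProduct x y u, fun c x => smul_dotProduct c x u⟩ 0) hx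

lemma pos_of_forall_dotProduct_le {Q : Set (Fin d → ℝ)} (h0 : (0 : Fin d → ℝ) ∈ interior Q)
    {u : Fin d → ℝ} (hu : u ≠ 0) {c : ℝ} (hc : ∀ x ∈ Q, x ⬝ᵥ u ≤ c) : 0 < c := by
  have hlim : Filter.Tendsto (fun t : ℝ => t • u) (nhdsWithin 0 (Set.Ioi 0)) (nhds 0) := by
    have hcont : Continuous fun t : ℝ => t • u := continuous_id.smul continuous_const
    simpa using (hcont.tendsto 0).mono_left nhdsWithin_le_nhds
  obtain ⟨t, htQ, ht⟩ :=
    ((hlim.eventually (mem_interior_iff_mem_nhds.mp h0)).and self_mem_nhdsWithin).exists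
  have huu : 0 < u ⬝ᵥ u :=
    lt_of_le_of_ne (Finset.sum_nonneg fun j _ => mul_self_nonneg (u j))
      (Ne.symm (dotProduct_self_eq_zero.not.mpr hu))
  calc 0 < t * (u ⬝ᵥ u) := mul_pos ht huu
    _ = (t • u) ⬝ᵥ u := (smul_dotProduct t u u).symm
    _ ≤ c := hc _ htQ

lemma mem_extremePoints_polarDual {P F : Set (Fin d → ℝ)} (hF : F ⊆ P) {z : Fin d → ℝ}
    (hz : z ∈ polarDual P) (hFz : ∀ x ∈ F, x ⬝ᵥ z = 1)
    (huniq : ∀ y ∈ polarDual P, (∀ x ∈ F, x ⬝ᵥ y = 1) → y = z) :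
    z ∈ (polarDual P).extremePoints ℝ := by
  refine mem_extremePoints.mpr ⟨hz, fun y₁ hy₁ y₂ hy₂ ⟨α, β, hα, hβ, hαβ, hy⟩ => ?_⟩
  have hF₁₂ : ∀ x ∈ F, x ⬝ᵥ y₁ = 1 ∧ x ⬝ᵥ y₂ = 1 := by
    intro x hx
    have h₁ : x ⬝ᵥ y₁ ≤ 1 := hy₁ x (hF hx)
    have h₂ : x ⬝ᵥ y₂ ≤ 1 := hy₂ x (hF hx)
    have hsum : α * (x ⬝ᵥ y₁) + β * (x ⬝ᵥ y₂) = 1 := by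
      rw [← hFz x hx, ← hy, dotProduct_add, dotProduct_smul, dotProduct_smul, smul_eq_mul,
        smul_eq_mul]
    constructor <;> nlinarith
  exact ⟨huniq y₁ hy₁ fun x hx => (hF₁₂ x hx).1, huniq y₂ hy₂ fun x hx => (hF₁₂ x hx).2⟩

lemma dotProduct_eq_add_of_eq_zero {y : Fin d → ℝ} {j₁ j₂ : Fin d} (hne : j₁ ≠ j₂)
    (hy : ∀ j, j ≠ j₁ → j ≠ j₂ → y j = 0) (x : Fin d → ℝ) :
    x ⬝ᵥ y = x j₁ * y j₁ + x j₂ * y j₂ :=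
  Fintype.sum_eq_add j₁ j₂ hne fun j ⟨h₁, h₂⟩ => by rw [hy j h₁ h₂, mul_zero]

lemma dotProduct_le_of_mem_image_simplexOf {v : Fin (d + 1) → Fin d → ℤ} {r : ℕ}
    {w u : Fin d → ℤ} (hv : ∀ i, v i ⬝ᵥ u ≤ 0) {x : Fin d → ℝ}
    (hx : x ∈ (fun x => (r : ℝ) • x + toReal w) '' simplexOf v) :
    x ⬝ᵥ toReal u ≤ ((w ⬝ᵥ u : ℤ) : ℝ) := by
  obtain ⟨t, ht, rfl⟩ := hx
  have htu : t ⬝ᵥ toReal u ≤ 0 := dotProduct_nonpos_of_mem_simplexOf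
    (fun i => by rw [toReal_dotProduct_toReal]; exact_mod_cast hv i) ht
  rw [add_dotProduct, smul_dotProduct, toReal_dotProduct_toReal, smul_eq_mul]
  nlinarith [(Nat.cast_nonneg r : (0 : ℝ) ≤ r)]

/- `huniq` (with `v 0 = 0` unfolded) says that the facet points `r • v i + w`, `i ≠ k`, lie on
a unique hyperplane `⟨x, y⟩ = 1`, namely `y = u / ⟨w, u⟩`. -/
lemma IsReflexive.pos_and_dvd_of_facet {v : Fin (d + 1) → Fin d → ℤ} (hv0 : v 0 = 0) {r : ℕ}
    (hr : r ≠ 0) {w : Fin d → ℤ}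
    (hQ : IsReflexive ((fun x => (r : ℝ) • x + toReal w) '' simplexOf v))
    {k : Fin (d + 1)} (hk0 : k ≠ 0) {u : Fin d → ℤ} (hu : u ≠ 0)
    (hv : ∀ i, v i ⬝ᵥ u ≤ 0) (hvu : ∀ i ≠ k, v i ⬝ᵥ u = 0)
    (huniq : ∀ y : Fin d → ℝ, toReal w ⬝ᵥ y = 1 → (∀ i ≠ k, toReal (v i) ⬝ᵥ y = 0) →
      ((w ⬝ᵥ u : ℤ) : ℝ) • y = toReal u) :
    0 < w ⬝ᵥ u ∧ ∀ j, w ⬝ᵥ u ∣ u j := by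
  obtain ⟨h0, -, V, hV⟩ := hQ
  set Q := (fun x => (r : ℝ) • x + toReal w) '' simplexOf v
  set H := w ⬝ᵥ u
  set X : Fin (d + 1) → Fin d → ℝ := fun i => (r : ℝ) • toReal (v i) + toReal w
  have hXQ : ∀ i, X i ∈ Q := fun i => ⟨_, subset_convexHull ℝ _ ⟨i, rfl⟩, rfl⟩
  have hXdot : ∀ i y, X i ⬝ᵥ y = r * (toReal (v i) ⬝ᵥ y) + toReal w ⬝ᵥ y := fun i y => by
    simp only [X, add_dotProduct, smul_dotProduct, smul_eq_mul]
  have hle : ∀ x ∈ Q, x ⬝ᵥ toReal u ≤ H := fun x => dotProduct_le_of_mem_image_simplexOf hv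
  have hH : (0 : ℝ) < H := pos_of_forall_dotProduct_le h0 (toReal_ne_zero hu) hle
  set z := (H : ℝ)⁻¹ • toReal u
  have hXz : ∀ i ≠ k, X i ⬝ᵥ z = 1 := fun i hi => by
    rw [hXdot, dotProduct_smul, dotProduct_smul, toReal_dotProduct_toReal,
      toReal_dotProduct_toReal, hvu i hi, smul_eq_mul, smul_eq_mul]
    field_simp
    simp [H]
  have hz : z ∈ polarDual Q := fun x hx => by
    change x ⬝ᵥ z ≤ 1
    rw [dotProduct_smul, smul_eq_mul, inv_mul_le_one₀ hH]
    exact hle x hx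
  have hext : z ∈ (polarDual Q).extremePoints ℝ := by
    refine mem_extremePoints_polarDual (F := X '' {i | i ≠ k}) ?_ hz ?_ ?_
    · rintro _ ⟨i, -, rfl⟩; exact hXQ i
    · rintro _ ⟨i, hi, rfl⟩; exact hXz i hi
    intro y _ hy
    have hwy : toReal w ⬝ᵥ y = 1 := by
      simpa [hXdot, hv0] using hy (X 0) ⟨0, Ne.symm hk0, rfl⟩
    have hvy : ∀ i ≠ k, toReal (v i) ⬝ᵥ y = 0 := fun i hi => by
      have := hy (X i) ⟨i, hi, rfl⟩
      rw [hXdot, hwy] at this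
      simpa [hr] using this
    calc y = (H : ℝ)⁻¹ • ((H : ℝ) • y) := by rw [smul_smul, inv_mul_cancel₀ hH.ne', one_smul]
      _ = z := by rw [huniq y hwy hvy]
  rw [hV] at hext
  obtain ⟨ζ, -, hζ⟩ := extremePoints_convexHull_subset hext
  refine ⟨by exact_mod_cast hH, fun j => ⟨ζ j, ?_⟩⟩
  have hj : (ζ j : ℝ) = (H : ℝ)⁻¹ * u j := congrFun hζ j
  field_simp at hj
  exact_mod_cast hj.symm.trans (mul_comm _ _)

end Polar

section SimplexVerts2

variable {d s : ℕ} {a b : ℕ → ℤ}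

lemma simplexVerts2_zero : simplexVerts2 d s a b 0 = 0 := by
  funext j
  simp [simplexVerts2]

lemma simplexVerts2_apply_of_succ_eq_d (hsd : s < d) (i : Fin (d + 1)) {j : Fin d}
    (hj : (j : ℕ) + 1 = d) : simplexVerts2 d s a b i j = if (i : ℕ) = d then b d else 0 := by
  simp only [simplexVerts2]
  split_ifs <;> first | omega | simp_all

lemma simplexVerts2_apply_of_succ_eq_s (hsd : s < d) (i : Fin (d + 1)) {j : Fin d}
    (hj : (j : ℕ) + 1 = s) :
    simplexVerts2 d s a b i j = if (i : ℕ) = s then a s else if (i : ℕ) = d then b s else 0 := by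
  simp only [simplexVerts2]
  split_ifs <;> first | omega | simp_all

lemma eq_zero_of_forall_dotProduct_simplexVerts2 {y : Fin d → ℝ}
    (hy : ∀ i : Fin (d + 1), (i : ℕ) ≠ 0 → (i : ℕ) ≠ s → (i : ℕ) ≠ d →
      toReal (simplexVerts2 d s a b i) ⬝ᵥ y = 0)
    {jS jD : Fin d} (hjS : (jS : ℕ) + 1 = s) (hjD : (jD : ℕ) + 1 = d)
    {j : Fin d} (hjS' : j ≠ jS) (hjD' : j ≠ jD) : y j = 0 := by
  have hvj : toReal (simplexVerts2 d s a b j.succ) = Pi.single j 1 := by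
    funext j'
    simp only [toReal, simplexVerts2, Fin.val_succ, Pi.single_apply, Fin.ext_iff]
    split_ifs <;> first | omega | simp_all
  have hjs : (j : ℕ) + 1 ≠ s := fun h => hjS' (Fin.ext (by omega))
  have hjd : (j : ℕ) + 1 ≠ d := fun h => hjD' (Fin.ext (by omega))
  simpa [hvj] using hy j.succ (by simp) (by simpa using hjs) (by simpa using hjd)

variable {r : ℕ} {w : Fin d → ℤ}

lemma IsReflexive.translate_eq_neg_one_of_simplexVerts2 (hsd : s < d) (has : a s ≠ 0)
    (hbd : 0 < b d) (hr : r ≠ 0)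
    (hQ : IsReflexive ((fun x => (r : ℝ) • x + toReal w) '' simplexOf (simplexVerts2 d s a b)))
    {jS jD : Fin d} (hjS : (jS : ℕ) + 1 = s) (hjD : (jD : ℕ) + 1 = d) : w jD = -1 := by
  have hne : jS ≠ jD := fun h => by have := congrArg Fin.val h; omega
  have hvD := fun i => simplexVerts2_apply_of_succ_eq_d (a := a) (b := b) hsd i hjD
  have hvS := fun i => simplexVerts2_apply_of_succ_eq_s (a := a) (b := b) hsd i hjS
  have huniq : ∀ y : Fin d → ℝ, toReal w ⬝ᵥ y = 1 →
      (∀ i ≠ Fin.last d, toReal (simplexVerts2 d s a b i) ⬝ᵥ y = 0) →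
      ((w ⬝ᵥ Pi.single jD (-1) : ℤ) : ℝ) • y = toReal (Pi.single jD (-1)) := by
    intro y hwy hvy
    have hoff : ∀ j, j ≠ jS → j ≠ jD → y j = 0 := fun j =>
      eq_zero_of_forall_dotProduct_simplexVerts2
        (fun i _ _ hid => hvy i (Fin.ext_iff.not.mpr hid)) hjS hjD
    have hdot := dotProduct_eq_add_of_eq_zero hne hoff
    have hyS : y jS = 0 := by
      have := hvy ⟨s, by omega⟩ (Fin.ext_iff.not.mpr (by simp; omega))
      simpa [hdot, toReal, hvS, hvD, has, show s ≠ d by omega] using this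
    rw [hdot, hyS] at hwy
    simp only [toReal, mul_zero, zero_add] at hwy
    funext j
    simp only [dotProduct_single, Pi.smul_apply, smul_eq_mul, toReal, Pi.single_apply]
    by_cases hjD' : j = jD
    · subst hjD'; simp; linarith
    by_cases hjS' : j = jS
    · subst hjS'; simp [hjD', hyS]
    simp [hjD', hoff j hjS' hjD']
  obtain ⟨hpos, hdvd⟩ := hQ.pos_and_dvd_of_facet simplexVerts2_zero hr
    (by simp [Fin.ext_iff]; omega) (by simp)
    (fun i => by simp only [dotProduct_single, hvD]; split_ifs <;> omega)
    (fun i hi => by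
      have hid : (i : ℕ) ≠ d := fun h => hi (Fin.ext (by simp [h]))
      simp [dotProduct_single, hvD, hid]) huniq
  simp only [dotProduct_single, mul_neg, mul_one] at hpos hdvd
  have := Int.eq_one_of_dvd_one hpos.le (by simpa using hdvd jD)
  omega

lemma IsReflexive.pos_and_dvd_of_simplexVerts2 (hsd : s < d) (has : 0 ≤ a s) (hbd : 0 < b d)
    (hr : r ≠ 0)
    (hQ : IsReflexive ((fun x => (r : ℝ) • x + toReal w) '' simplexOf (simplexVerts2 d s a b)))
    {jS jD : Fin d} (hjS : (jS : ℕ) + 1 = s) (hjD : (jD : ℕ) + 1 = d) :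
    0 < w jD * b s - w jS * b d ∧ w jD * b s - w jS * b d ∣ b d ∧
      w jD * b s - w jS * b d ∣ b s := by
  have hne : jS ≠ jD := fun h => by have := congrArg Fin.val h; omega
  have hvD := fun i => simplexVerts2_apply_of_succ_eq_d (a := a) (b := b) hsd i hjD
  have hvS := fun i => simplexVerts2_apply_of_succ_eq_s (a := a) (b := b) hsd i hjS
  set u : Fin d → ℤ := Pi.single jS (-b d) + Pi.single jD (b s)
  have hwu : w ⬝ᵥ u = w jD * b s - w jS * b d := by
    simp only [u, dotProduct_add, dotProduct_single]; ring
  have huniq : ∀ y : Fin d → ℝ, toReal w ⬝ᵥ y = 1 →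
      (∀ i ≠ (⟨s, by omega⟩ : Fin (d + 1)), toReal (simplexVerts2 d s a b i) ⬝ᵥ y = 0) →
      ((w ⬝ᵥ u : ℤ) : ℝ) • y = toReal u := by
    intro y hwy hvy
    have hoff : ∀ j, j ≠ jS → j ≠ jD → y j = 0 := fun j =>
      eq_zero_of_forall_dotProduct_simplexVerts2
        (fun i _ his _ => hvy i (Fin.ext_iff.not.mpr his)) hjS hjD
    have hdot := dotProduct_eq_add_of_eq_zero hne hoff
    have hyD : (b s : ℝ) * y jS + b d * y jD = 0 := by
      have := hvy (Fin.last d) (Fin.ext_iff.not.mpr (by simp; omega))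
      simpa [hdot, toReal, hvS, hvD, show d ≠ s by omega] using this
    rw [hdot] at hwy
    simp only [toReal] at hwy
    funext j
    simp only [hwu, u, Pi.smul_apply, smul_eq_mul, toReal, Pi.add_apply, Pi.single_apply]
    by_cases hjS' : j = jS
    · subst hjS'; simp [hne]; linear_combination (-(b d : ℝ)) * hwy + (w jD : ℝ) * hyD
    by_cases hjD' : j = jD
    · subst hjD'; simp [hjS']; linear_combination (b s : ℝ) * hwy - (w jS : ℝ) * hyD
    simp [hjS', hjD', hoff j hjS' hjD']
  obtain ⟨hpos, hdvd⟩ := hQ.pos_and_dvd_of_facet simplexVerts2_zero hr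
    (Fin.ext_iff.not.mpr (by simp; omega)) (u := u)
    (fun h => by simpa [u, hne, hbd.ne'] using congrFun h jS)
    (fun i => by
      simp only [u, dotProduct_add, dotProduct_single, hvS, hvD]
      split_ifs <;> first | omega | nlinarith)
    (fun i hi => by
      have his : (i : ℕ) ≠ s := fun h => hi (Fin.ext h)
      simp only [u, dotProduct_add, dotProduct_single, hvS, hvD, his, if_false]
      split_ifs <;> ring) huniq
  rw [hwu] at hpos hdvd
  refine ⟨hpos, ?_, ?_⟩
  · simpa [u, hne] using hdvd jS
  · simpa [u, Ne.symm hne] using hdvd jD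

end SimplexVerts2

lemma eq_zero_or_eq_sub_one_of_dvd {q : ℕ} (hq : q.Prime) {b c : ℤ} (hb : 0 ≤ b ∧ b < q)
    (hpos : 0 < q * c - b) (hdq : q * c - b ∣ q) (hdb : q * c - b ∣ b) : b = 0 ∨ b = q - 1 := by
  rcases hb.1.eq_or_lt with hb0 | hb0
  · exact Or.inl hb0.symm
  have hlt : q * c - b < q := (Int.le_of_dvd hb0 hdb).trans_lt hb.2
  have hone : q * c - b = 1 := by
    rcases hq.eq_one_or_self_of_dvd _ (Int.natAbs_dvd_natAbs.mpr hdq) with h | h <;> omega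
  have hc : c = 1 := by nlinarith
  subst hc
  omega

theorem statement12_general (d s : ℕ) (hs : 1 ≤ s) (hsd : s < d)
    (p q r : ℕ) (hp : p.Prime) (hq : q.Prime) (hr : 1 ≤ r) (a b : ℕ → ℤ)
    (hbrange : ∀ i, 1 ≤ i → i ≤ d - 1 → 0 ≤ b i ∧ b i < (q : ℤ))
    (has : a s = (p : ℤ)) (hbd : b d = (q : ℤ))
    (hG : IsGorenstein (simplexOf (simplexVerts2 d s a b)) r) :
    b s = 0 ∨ b s = (q : ℤ) - 1 := by
  obtain ⟨w, hQ⟩ := hG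
  obtain ⟨jS, hjS⟩ : ∃ j : Fin d, (j : ℕ) + 1 = s := ⟨⟨s - 1, by omega⟩, by simp; omega⟩
  obtain ⟨jD, hjD⟩ : ∃ j : Fin d, (j : ℕ) + 1 = d := ⟨⟨d - 1, by omega⟩, by simp; omega⟩
  have hr0 : r ≠ 0 := by omega
  have hqpos : 0 < b d := by rw [hbd]; exact_mod_cast hq.pos
  have hwD : w jD = -1 := hQ.translate_eq_neg_one_of_simplexVerts2 hsd
    (by rw [has]; exact_mod_cast hp.ne_zero) hqpos hr0 hjS hjD
  obtain ⟨hpos, hdq, hdb⟩ :=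
    hQ.pos_and_dvd_of_simplexVerts2 hsd (by rw [has]; positivity) hqpos hr0 hjS hjD
  rw [hwD, hbd] at hpos hdq hdb
  exact eq_zero_or_eq_sub_one_of_dvd hq (hbrange s hs (by omega)) (c := -w jS)
    (by linarith) (by convert hdq using 1; ring) (by convert hdb using 1; ring)

/-- if `a s = p`, `b d = q` are primes and `Δ(A,B)` is Gorenstein of
index `r`, then `b s = 0` or `b s = q - 1`. -/
theorem statement12 (d s : ℕ) (hs : 1 ≤ s) (hsd : s < d)
    (p q r : ℕ) (hp : p.Prime) (hq : q.Prime) (hr : 1 ≤ r) (a b : ℕ → ℤ)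
    (harange : ∀ i, 1 ≤ i → i ≤ s - 1 → 0 ≤ a i ∧ a i < (p : ℤ))
    (hbrange : ∀ i, 1 ≤ i → i ≤ d - 1 → 0 ≤ b i ∧ b i < (q : ℤ))
    (has : a s = (p : ℤ)) (hbd : b d = (q : ℤ))
    (hG : IsGorenstein (simplexOf (simplexVerts2 d s a b)) r) :
    b s = 0 ∨ b s = (q : ℤ) - 1 :=
  statement12_general d s hs hsd p q r hp hq hr a b hbrange has hbd hG
end
end

section
/- Let Δ(A) be Gorenstein of index r (with 1 ≤ a_0,…,a_{d-1} < a_d, a_i | a_d for 0 ≤ i ≤ d−1, r·a_d = a_0 + ⋯ + a_{d-1} + 1) and set Δ = r·Δ(A) − (1,…,1) and b_i = a_d/a_i for 0 ≤ i ≤ d−1. Then the normalized volume of the dual reflexive simplex Δ^∨ equals r · b_0 b_1 ⋯ b_{d-1}. -/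
/-!
If the vertices `w₀, …, w_d` of a simplex satisfy `∑ cᵢ wᵢ = 0` with all `cᵢ > 0`, its polar
dual is `{y | ⟨wᵢ, y⟩ ≤ 1 ∀ i}`. By the linear relation the weighted slacks
`zᵢ = cᵢ (1 - ⟨wᵢ, y⟩) / ∑ c` satisfy `∑_{i<d} zᵢ = 1 - z_d`, so `y ↦ (zᵢ)_{i<d}` maps the dual
affinely onto the corner simplex `{z ≥ 0, ∑ z ≤ 1}`. The latter has volume `1/d!`: partial sums
map it onto the order simplex `0 ≤ z₀ ≤ ⋯ ≤ z_{d-1} ≤ 1`, whose `d!` coordinate permutations tile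
the unit cube. Hence `d! · vol = (∑ c)^d / (|det (w₀, …, w_{d-1})| ∏_{i<d} cᵢ)`.

For `Δ = r·Δ(A) - (1, …, 1)` one can take `cᵢ = aᵢ` for `i < d` and `c_d = 1`, since
`∑_{i<d} aᵢ vᵢ + v_d = a_d (1, …, 1)`; then `∑ c = r a_d`, and subtracting the row
`w₀ = -(1, …, 1)` from the others shows `|det (w₀, …, w_{d-1})| = r^{d-1}`.
-/

open scoped BigOperators
open MeasureTheory

noncomputable section

open Matrix
open scoped Nat ENNReal

theorem volume_preimage_mulVec {n : ℕ} {A : Matrix (Fin n) (Fin n) ℝ} (hA : A.det ≠ 0)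
    (s : Set (Fin n → ℝ)) :
    volume ((A *ᵥ ·) ⁻¹' s) = ENNReal.ofReal |A.det⁻¹| * volume s := by
  rw [← LinearMap.det_toLin'] at hA ⊢
  exact Measure.addHaar_preimage_linearMap _ hA s

theorem volume_setOf_apply_eq_apply {n : ℕ} {i j : Fin n} (hij : i ≠ j) :
    volume {y : Fin n → ℝ | y i = y j} = 0 := by
  let L : (Fin n → ℝ) →ₗ[ℝ] ℝ :=
    (LinearMap.proj i : (Fin n → ℝ) →ₗ[ℝ] ℝ) - LinearMap.proj j
  have hL : {y : Fin n → ℝ | y i = y j} = LinearMap.ker L := by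
    ext y; simp [L, sub_eq_zero]
  rw [hL]
  refine Measure.addHaar_submodule _ _ fun htop => ?_
  have h : Pi.single i 1 ∈ LinearMap.ker L := htop ▸ Submodule.mem_top
  simp [L, hij.symm] at h

theorem measurePreserving_comp_perm {n : ℕ} (σ : Equiv.Perm (Fin n)) :
    MeasurePreserving (fun x : Fin n → ℝ => x ∘ σ) volume volume := by
  convert volume_measurePreserving_piCongrLeft (fun _ : Fin n => ℝ) σ.symm using 1
  ext x i
  simp [MeasurableEquiv.piCongrLeft, Equiv.piCongrLeft]

def orderSimplex (n : ℕ) : Set (Fin n → ℝ) :=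
  {y | Monotone y} ∩ Set.univ.pi fun _ => Set.Icc 0 1

theorem measurableSet_orderSimplex (n : ℕ) : MeasurableSet (orderSimplex n) := by
  refine .inter ?_ (.univ_pi fun _ => measurableSet_Icc)
  simp only [Monotone, Set.ofPred_forall]
  exact .iInter fun i => .iInter fun j => .iInter fun _ =>
    measurableSet_le (measurable_pi_apply i) (measurable_pi_apply j)

theorem iUnion_preimage_comp_perm_orderSimplex (n : ℕ) :
    ⋃ σ : Equiv.Perm (Fin n), (· ∘ σ) ⁻¹' orderSimplex n = Set.univ.pi fun _ => Set.Icc 0 1 := by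
  ext y
  simp only [Set.mem_iUnion, Set.mem_preimage, orderSimplex, Set.mem_inter_iff, Set.mem_univ_pi,
    Set.mem_ofPred_eq, Function.comp_apply]
  exact ⟨fun ⟨σ, _, h⟩ i => by simpa using h (σ⁻¹ i),
    fun h => ⟨Tuple.sort y, Tuple.monotone_sort y, fun i => h _⟩⟩

theorem aedisjoint_preimage_comp_perm_orderSimplex {n : ℕ} {σ τ : Equiv.Perm (Fin n)} (h : σ ≠ τ) :
    AEDisjoint volume ((· ∘ σ) ⁻¹' orderSimplex n) ((· ∘ τ) ⁻¹' orderSimplex n) := by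
  refine measure_mono_null (t := ⋃ (i) (j) (_ : i ≠ j), {y : Fin n → ℝ | y i = y j}) ?_
    (measure_iUnion_null fun i => measure_iUnion_null fun j => measure_iUnion_null
      fun hij => volume_setOf_apply_eq_apply hij)
  rintro y ⟨⟨hσ, -⟩, ⟨hτ, -⟩⟩
  by_contra hy
  simp only [Set.mem_iUnion, not_exists, Set.mem_ofPred_eq] at hy
  have hinj : Function.Injective y := fun i j hij => by_contra fun hne => hy i j hne hij
  refine h (Equiv.ext fun i => hinj (congrFun (?_ : y ∘ σ = y ∘ τ) i))
  exact ((Tuple.comp_sort_eq_comp_iff_monotone).2 hσ).trans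
    ((Tuple.comp_sort_eq_comp_iff_monotone).2 hτ).symm

theorem factorial_mul_volume_orderSimplex (n : ℕ) : (n ! : ℝ≥0∞) * volume (orderSimplex n) = 1 := by
  have hmeas := measurableSet_orderSimplex n
  have hcube : volume (Set.univ.pi fun _ : Fin n => Set.Icc (0 : ℝ) 1) = 1 := by
    rw [volume_pi_pi]; simp
  rw [← iUnion_preimage_comp_perm_orderSimplex,
    measure_iUnion₀ (fun σ τ h => aedisjoint_preimage_comp_perm_orderSimplex h)
      fun σ => (hmeas.preimage (measurePreserving_comp_perm σ).measurable).nullMeasurableSet,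
    tsum_fintype] at hcube
  simp only [fun σ => (measurePreserving_comp_perm σ).measure_preimage hmeas.nullMeasurableSet,
    Finset.sum_const, Finset.card_univ, Fintype.card_perm, Fintype.card_fin, nsmul_eq_mul] at hcube
  exact hcube

def cornerSimplex (n : ℕ) : Set (Fin n → ℝ) := {x | (∀ i, 0 ≤ x i) ∧ ∑ i, x i ≤ 1}

def partialSumMatrix (n : ℕ) : Matrix (Fin n) (Fin n) ℝ :=
  Matrix.of fun i j => if j ≤ i then 1 else 0

theorem partialSumMatrix_mulVec {n : ℕ} (x : Fin n → ℝ) (i : Fin n) :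
    (partialSumMatrix n *ᵥ x) i = ∑ j ∈ Finset.Iic i, x j := by
  simp only [partialSumMatrix, mulVec, dotProduct, of_apply, ite_mul, one_mul, zero_mul]
  rw [← Finset.sum_filter]
  congr 1
  ext j
  simp

theorem det_partialSumMatrix (n : ℕ) : (partialSumMatrix n).det = 1 := by
  rw [det_of_isLowerTriangular _ fun i j hij => ?_]
  · simp [partialSumMatrix]
  · exact if_neg (not_le.2 hij)

theorem preimage_partialSumMatrix_orderSimplex (n : ℕ) :
    (partialSumMatrix n *ᵥ ·) ⁻¹' orderSimplex n = cornerSimplex n := by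
  ext x
  simp only [Set.mem_preimage, orderSimplex, cornerSimplex, Set.mem_inter_iff, Set.mem_ofPred_eq,
    Set.mem_univ_pi, Set.mem_Icc, funext (partialSumMatrix_mulVec x)]
  constructor
  · rintro ⟨hmono, hbound⟩
    cases n with
    | zero => simp
    | succ m =>
      refine ⟨fun i => ?_, by simpa [← Fin.top_eq_last] using (hbound (Fin.last m)).2⟩
      have hsplit : ∑ j ∈ Finset.Iic i, x j = x i + ∑ j ∈ Finset.Iio i, x j := by
        rw [← Finset.Iio_insert, Finset.sum_insert Finset.notMem_Iio_self]
      rcases (Fin.zero_le i).eq_or_lt with rfl | hi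
      · simpa [hsplit, ← bot_eq_zero] using (hbound 0).1
      · have := hmono (show i - 1 ≤ i by rw [Fin.le_def, Fin.val_sub_one_of_ne_zero hi.ne']; omega)
        simp only [Fin.Iic_sub_one_eq_Iio hi, hsplit] at this
        linarith
  · rintro ⟨hpos, hsum⟩
    refine ⟨fun i j hij => ?_, fun i => ⟨Finset.sum_nonneg fun j _ => hpos j, ?_⟩⟩
    · exact Finset.sum_le_sum_of_subset_of_nonneg (Finset.Iic_subset_Iic.2 hij) fun k _ _ => hpos k
    · exact (Finset.sum_le_sum_of_subset_of_nonneg (Finset.subset_univ _)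
        fun k _ _ => hpos k).trans hsum

theorem factorial_mul_volume_cornerSimplex (n : ℕ) :
    (n ! : ℝ≥0∞) * volume (cornerSimplex n) = 1 := by
  rw [← preimage_partialSumMatrix_orderSimplex,
    volume_preimage_mulVec (by simp [det_partialSumMatrix]), det_partialSumMatrix]
  simpa using factorial_mul_volume_orderSimplex n

theorem sum_castSucc_mul_one_sub_dotProduct {n : ℕ} {w : Fin (n + 1) → Fin n → ℝ}
    {c : Fin (n + 1) → ℝ} (hrel : ∑ i, c i • w i = 0) (y : Fin n → ℝ) :
    ∑ i : Fin n, c i.castSucc * (1 - w i.castSucc ⬝ᵥ y) =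
      ∑ i, c i + c (Fin.last n) * (w (Fin.last n) ⬝ᵥ y - 1) := by
  have h := congrArg (· ⬝ᵥ y) hrel
  rw [sum_dotProduct, zero_dotProduct] at h
  simp only [smul_dotProduct, smul_eq_mul, Fin.sum_univ_castSucc] at h
  simp only [mul_sub, mul_one, Finset.sum_sub_distrib, Fin.sum_univ_castSucc]
  linarith

theorem factorial_mul_volume_setOf_dotProduct_le_one {n : ℕ} (w : Fin (n + 1) → Fin n → ℝ)
    (hw : (Matrix.of fun i => w (Fin.castSucc i)).det ≠ 0)
    {c : Fin (n + 1) → ℝ} (hc : ∀ i, 0 < c i) (hrel : ∑ i, c i • w i = 0) :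
    (n ! : ℝ≥0∞) * volume {y | ∀ i, w i ⬝ᵥ y ≤ 1} =
      ENNReal.ofReal ((∑ i, c i) ^ n /
        (|(Matrix.of fun i => w (Fin.castSucc i)).det| * ∏ i : Fin n, c i.castSucc)) := by
  set W : Matrix (Fin n) (Fin n) ℝ := Matrix.of fun i => w (Fin.castSucc i)
  set σ := ∑ i, c i with hσ_def
  have hσ : 0 < σ := Finset.sum_pos (fun i _ => hc i) Finset.univ_nonempty
  set l : Fin n → ℝ := fun i => c i.castSucc / σ
  have hl : ∀ i, 0 < l i := fun i => div_pos (hc _) hσ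
  set A : Matrix (Fin n) (Fin n) ℝ := -(diagonal l * W)
  have hA : A.det = (-1) ^ n * ((∏ i, l i) * W.det) := by
    simp [A, det_neg, det_diagonal]
  have hAne : A.det ≠ 0 := by
    rw [hA]
    exact mul_ne_zero (by simp) (mul_ne_zero (Finset.prod_ne_zero_iff.2 fun i _ => (hl i).ne') hw)
  have hAy : ∀ y i, (A *ᵥ y + l) i = l i * (1 - w i.castSucc ⬝ᵥ y) := by
    intro y i
    simp only [A, neg_mulVec, ← mulVec_mulVec, Pi.add_apply, Pi.neg_apply, mulVec_diagonal]
    change -(l i * (w i.castSucc ⬝ᵥ y)) + l i = _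
    ring
  have hset : {y | ∀ i, w i ⬝ᵥ y ≤ 1} = (A *ᵥ ·) ⁻¹' ((· + l) ⁻¹' cornerSimplex n) := by
    ext y
    have hsum : ∑ i, l i * (1 - w i.castSucc ⬝ᵥ y) =
        1 + c (Fin.last n) / σ * (w (Fin.last n) ⬝ᵥ y - 1) := by
      simp only [l, div_mul_eq_mul_div, ← Finset.sum_div, sum_castSucc_mul_one_sub_dotProduct hrel,
        ← hσ_def]
      field_simp
    have hk : 0 < c (Fin.last n) / σ := div_pos (hc _) hσ
    simp only [Set.mem_ofPred_eq, Set.mem_preimage, cornerSimplex, Fin.forall_fin_succ', hAy, hsum]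
    refine and_congr (forall_congr' fun i => ?_) ?_
    · rw [mul_nonneg_iff_of_pos_left (hl i), sub_nonneg]
    · constructor <;> intro h <;> nlinarith
  rw [hset, volume_preimage_mulVec hAne, measure_preimage_add_right, mul_left_comm,
    factorial_mul_volume_cornerSimplex, mul_one, hA]
  congr 1
  have hprod : 0 < ∏ i, c (Fin.castSucc i) := Finset.prod_pos fun i _ => hc _
  simp only [l, Finset.prod_div_distrib, Finset.prod_const, Finset.card_univ, Fintype.card_fin,
    abs_inv, abs_mul, abs_pow, abs_neg, abs_one, one_pow, one_mul, abs_div, abs_of_pos hprod,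
    abs_of_pos hσ]
  field_simp

theorem polarDual_convexHull {d : ℕ} (s : Set (Fin d → ℝ)) :
    polarDual (convexHull ℝ s) = polarDual s := by
  refine Set.Subset.antisymm (fun y hy x hx => hy x (subset_convexHull ℝ s hx)) fun y hy x hx => ?_
  have hconv : Convex ℝ {x : Fin d → ℝ | x ⬝ᵥ y ≤ 1} :=
    convex_halfSpace_le ⟨fun x x' => add_dotProduct x x' y, fun t x => smul_dotProduct t x y⟩ 1
  exact convexHull_min hy hconv hx

theorem polarDual_range {d : ℕ} {ι : Type*} (w : ι → Fin d → ℝ) :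
    polarDual (Set.range w) = {y | ∀ i, w i ⬝ᵥ y ≤ 1} := by
  simp [polarDual, dotProduct]

theorem polarDual_dilate_simplexOf {d : ℕ} (v : Fin (d + 1) → Fin d → ℤ) (r : ℝ) :
    polarDual ((fun x => r • x - 1) '' simplexOf v) =
      {y | ∀ i, (r • toReal (v i) - 1) ⬝ᵥ y ≤ 1} := by
  let f : (Fin d → ℝ) →ᵃ[ℝ] (Fin d → ℝ) :=
    (r • LinearMap.id : (Fin d → ℝ) →ₗ[ℝ] _).toAffineMap + AffineMap.const ℝ _ (-1)
  have hf : (fun x => r • x - 1) = ⇑f := by ext x i; simp [f, sub_eq_add_neg]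
  rw [simplexOf, hf, f.image_convexHull, ← Set.range_comp, polarDual_convexHull, polarDual_range]
  simp [f, sub_eq_add_neg]

theorem simplexVerts_castSucc {d : ℕ} (a : ℕ → ℤ) (i j : Fin d) :
    simplexVerts d a i.castSucc j = if (j : ℕ) + 1 = i then 1 else 0 := by
  have hi : (i : ℕ) ≠ d := i.isLt.ne
  by_cases h0 : (i : ℕ) = 0
  · simp [simplexVerts, h0]
  · simp [simplexVerts, h0, hi]

theorem simplexVerts_last {d : ℕ} (a : ℕ → ℤ) (j : Fin d) :
    simplexVerts d a (Fin.last d) j =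
      if (j : ℕ) + 1 < d then a d - a ((j : ℕ) + 1) else a d := by
  have hd : d ≠ 0 := by have := j.isLt; omega
  have : (j : ℕ) = d - 1 ↔ ¬ (j : ℕ) + 1 < d := by omega
  simp only [simplexVerts, Fin.val_last, hd, if_false, if_true, this]
  exact ite_not _ _ _

/-- Up to the factor `r a_d`, these are the barycentric coordinates of `(1/r, …, 1/r)` in `Δ(A)`. -/
def simplexWeights (d : ℕ) (a : ℕ → ℤ) : Fin (d + 1) → ℝ :=
  Fin.snoc (fun i : Fin d => (a i : ℝ)) 1

theorem simplexWeights_pos {d : ℕ} {a : ℕ → ℤ} (ha : ∀ i, i < d → 0 < a i) (i : Fin (d + 1)) :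
    0 < simplexWeights d a i := by
  induction i using Fin.lastCases with
  | last => simp [simplexWeights]
  | cast i => simpa [simplexWeights] using ha i i.isLt

theorem sum_simplexWeights (d : ℕ) (a : ℕ → ℤ) :
    ∑ i, simplexWeights d a i = ∑ i ∈ Finset.range d, (a i : ℝ) + 1 := by
  simp [simplexWeights, Fin.sum_univ_castSucc, Fin.sum_univ_eq_sum_range (fun i => (a i : ℝ))]

theorem prod_simplexWeights_castSucc (d : ℕ) (a : ℕ → ℤ) :
    ∏ i : Fin d, simplexWeights d a i.castSucc = ∏ i ∈ Finset.range d, (a i : ℝ) := by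
  simp [simplexWeights, Fin.prod_univ_eq_prod_range (fun i => (a i : ℝ))]

theorem sum_simplexWeights_smul_simplexVerts (d : ℕ) (a : ℕ → ℤ) :
    ∑ i, simplexWeights d a i • toReal (simplexVerts d a i) = (a d : ℝ) • 1 := by
  ext j
  simp only [Fin.sum_univ_castSucc, simplexWeights, Fin.snoc_castSucc, Fin.snoc_last,
    Finset.sum_apply, Pi.smul_apply, smul_eq_mul, toReal, simplexVerts_castSucc,
    simplexVerts_last, Pi.one_apply, mul_one]
  split_ifs with hj
  · rw [Fintype.sum_eq_single ⟨(j : ℕ) + 1, hj⟩ fun i hi => by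
      simp [show (j : ℕ) + 1 ≠ i from fun h => hi (Fin.ext h.symm)]]
    simp
  · rw [Finset.sum_eq_zero fun i _ => by simp [show (j : ℕ) + 1 ≠ i by omega]]
    simp

theorem sum_simplexWeights_smul_dilate {d : ℕ} {a : ℕ → ℤ} {r : ℝ}
    (hσ : ∑ i, simplexWeights d a i = r * a d) :
    ∑ i, simplexWeights d a i • (r • toReal (simplexVerts d a i) - 1) = 0 := by
  calc ∑ i, simplexWeights d a i • (r • toReal (simplexVerts d a i) - 1)
      = r • ∑ i, simplexWeights d a i • toReal (simplexVerts d a i) -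
          (∑ i, simplexWeights d a i) • 1 := by
        simp only [smul_sub, Finset.sum_sub_distrib, Finset.smul_sum, Finset.sum_smul, smul_comm r]
    _ = 0 := by rw [sum_simplexWeights_smul_simplexVerts, hσ, smul_smul, sub_self]

theorem det_shift_sub_one (m : ℕ) (r : ℝ) :
    (Matrix.of fun i j : Fin (m + 1) => (if (j : ℕ) + 1 = i then r else 0) - 1).det
      = (-1) ^ (m + 1) * r ^ m := by
  set B : Matrix (Fin (m + 1)) (Fin (m + 1)) ℝ :=
    Matrix.of fun i j => if i = 0 then -1 else if (j : ℕ) + 1 = i then r else 0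
  rw [det_eq_of_forall_row_eq_smul_add_const (B := B) (fun i => if i = 0 then 0 else 1) 0
    (if_pos rfl) fun i j => ?_]
  · have hsub : B.submatrix Fin.succ Fin.castSucc = r • (1 : Matrix (Fin m) (Fin m) ℝ) := by
      ext i j
      by_cases h : i = j
      · simp [B, h]
      · have : (j : ℕ) ≠ i := fun h' => h (Fin.ext h'.symm)
        simp [B, h, this]
    rw [det_succ_column B (Fin.last m), Fintype.sum_eq_single 0 fun i hi => ?_]
    · simp [B, hsub, pow_succ]
    · have : (m : ℕ) + 1 ≠ i := by omega
      simp [B, hi, this]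
  · by_cases hi : i = 0
    · subst hi; simp [B]
    · simp [B, hi, sub_eq_add_neg]

theorem det_dilate_simplexVerts_castSucc (m : ℕ) (a : ℕ → ℤ) (r : ℝ) :
    (Matrix.of fun i : Fin (m + 1) => r • toReal (simplexVerts (m + 1) a i.castSucc) - 1).det
      = (-1) ^ (m + 1) * r ^ m := by
  rw [← det_shift_sub_one]
  congr 1
  ext i j
  simp [toReal, simplexVerts_castSucc]

theorem statement15_general {d : ℕ} (hd : 1 ≤ d) (r : ℕ) (hr : 1 ≤ r) (a : ℕ → ℤ)
    (ha : ∀ i, i < d → 1 ≤ a i ∧ a i < a d)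
    (hsum : (r : ℤ) * a d = (∑ i ∈ Finset.range d, a i) + 1) :
    (Nat.factorial d : ENNReal) *
        volume (polarDual ((fun x => (r : ℝ) • x - 1) '' simplexOf (simplexVerts d a)))
      = ENNReal.ofReal ((r : ℝ) * ∏ i ∈ Finset.range d, ((a d : ℝ) / (a i : ℝ))) := by
  obtain ⟨m, rfl⟩ : ∃ m, d = m + 1 := ⟨d - 1, by omega⟩
  have hr0 : (0 : ℝ) < r := by exact_mod_cast hr
  have hσ : ∑ i, simplexWeights (m + 1) a i = r * a (m + 1) := by
    rw [sum_simplexWeights]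
    exact_mod_cast hsum.symm
  rw [polarDual_dilate_simplexOf, factorial_mul_volume_setOf_dotProduct_le_one _
      (by rw [det_dilate_simplexVerts_castSucc]; simp [hr0.ne'])
      (simplexWeights_pos fun i hi => (ha i hi).1) (sum_simplexWeights_smul_dilate hσ),
    hσ, det_dilate_simplexVerts_castSucc, prod_simplexWeights_castSucc]
  congr 1
  have hprod : 0 < ∏ i ∈ Finset.range (m + 1), (a i : ℝ) :=
    Finset.prod_pos fun i hi => by exact_mod_cast (ha i (Finset.mem_range.1 hi)).1
  rw [Finset.prod_div_distrib, Finset.prod_const, Finset.card_range, abs_mul, abs_pow, abs_neg,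
    abs_one, one_pow, one_mul, abs_of_pos (pow_pos hr0 m)]
  field_simp
  ring

/-- for the Gorenstein simplex `Δ(A)` of index `r` and
`Δ = r·Δ(A) - (1,…,1)`, the normalized volume of the dual reflexive simplex `Δ^∨`
equals `r · b 0 ⋯ b (d-1)` where `b i = a d / a i`. -/
theorem statement15 {d : ℕ} (hd : 1 ≤ d) (r : ℕ) (hr : 1 ≤ r) (a : ℕ → ℤ)
    (ha : ∀ i, i < d → 1 ≤ a i ∧ a i < a d)
    (hdvd : ∀ i, i < d → a i ∣ a d)
    (hsum : (r : ℤ) * a d = (∑ i ∈ Finset.range d, a i) + 1) :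
    (Nat.factorial d : ENNReal) *
        volume (polarDual ((fun x => (r : ℝ) • x - 1) '' simplexOf (simplexVerts d a)))
      = ENNReal.ofReal ((r : ℝ) * ∏ i ∈ Finset.range d, ((a d : ℝ) / (a i : ℝ))) :=
  statement15_general hd r hr a ha hsum
end
end
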